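/- arXiv:2112.09338 — 11 statements merged into one kernel-verified Lean document; each statement's English description precedes it below -/
import Mathlib

section
/- Let A be a Noetherian ring, I ⊆ A an ideal, and s ≥ 1. Set K_s = ⋂_{p ∈ Ass(A/I^s) \ Min(I)} p (with K_s = A if the index set is empty). Then the minimal-primes symbolic power satisfies ᵐI^(s) = I^s : K_s^∞. -/
open Ideal

/-- The saturation `I : K^∞ = ⋃ₜ (I : Kᵗ)`. -/
noncomputable def satur {A : Type*} [CommRing A] (I K : Ideal A) : Ideal A :=
  ⨆ t : ℕ, I.colon ((K ^ t : Ideal A) : Set A)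

/-- Contraction to `A` of the extension of `I` to the localization at a prime `p`. -/
noncomputable def locContract {A : Type*} [CommRing A] (I p : Ideal A) [p.IsPrime] : Ideal A :=
  Ideal.comap (algebraMap A (Localization.AtPrime p))
    (Ideal.map (algebraMap A (Localization.AtPrime p)) I)

/-- The "minimal" symbolic power `ᵐI^(s) = ⋂_{p ∈ Min(I)} (I^s A_p ∩ A)`. -/
noncomputable def minSymb {A : Type*} [CommRing A] (I : Ideal A) (s : ℕ) : Ideal A :=
  ⨅ p : {p : Ideal A // p ∈ I.minimalPrimes},
    haveI : p.1.IsPrime := p.2.1.1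
    locContract (I ^ s) p.1

section Aux

variable {A : Type*} [CommRing A]

lemma mem_locContract_iff (J p : Ideal A) [p.IsPrime] (x : A) :
    x ∈ locContract J p ↔ ∃ u ∉ p, u * x ∈ J := by
  rw [locContract, Ideal.mem_comap,
    IsLocalization.mem_map_algebraMap_iff p.primeCompl (Localization.AtPrime p)]
  constructor
  · rintro ⟨⟨⟨a, ha⟩, u⟩, h⟩
    rw [← _root_.map_mul] at h
    obtain ⟨c, hc⟩ :=
      (IsLocalization.eq_iff_exists p.primeCompl (Localization.AtPrime p)).mp h
    refine ⟨c * u, (c * u).2, ?_⟩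
    have h2 : (c : A) * (u : A) * x = (c : A) * a := by
      rw [show (c : A) * (u : A) * x = (c : A) * (x * (u : A)) by ring]
      exact hc
    rw [h2]
    exact J.mul_mem_left _ ha
  · rintro ⟨u, hu, hux⟩
    refine ⟨⟨⟨u * x, hux⟩, ⟨u, hu⟩⟩, ?_⟩
    rw [← _root_.map_mul]
    exact congrArg _ (mul_comm x u)

lemma colon_radical_of_primary {Q : Ideal A} (hQ : Q.IsPrimary) {x : A} (hx : x ∉ Q) :
    (Q.colon (Ideal.span {x})).radical = Q.radical := by
  apply le_antisymm
  · refine (Ideal.radical_mono fun a ha => ?_).trans Q.radical_idem.le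
    have hax : x * a ∈ Q := by
      rw [mul_comm]; exact Ideal.mem_colon_span_singleton.mp ha
    exact ((Ideal.isPrimary_iff.mp hQ).2 hax).resolve_left hx
  · exact Ideal.radical_mono fun a ha =>
      Ideal.mem_colon_span_singleton.mpr (Q.mul_mem_right x ha)

lemma colon_isPrimary_of_primary {Q : Ideal A} (hQ : Q.IsPrimary) {x : A} (hx : x ∉ Q) :
    (Q.colon (Ideal.span {x})).IsPrimary := by
  rw [Ideal.isPrimary_iff]
  constructor
  · intro h
    apply hx
    have h1 : (1 : A) ∈ Q.colon (Ideal.span {x}) := h ▸ Submodule.mem_top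
    simpa using Ideal.mem_colon_span_singleton.mp h1
  · intro a b hab
    have : (a * x) * b ∈ Q := by
      have h0 : (a * b) * x ∈ Q := Ideal.mem_colon_span_singleton.mp hab
      rwa [show (a * x) * b = (a * b) * x by ring]
    rcases (Ideal.isPrimary_iff.mp hQ).2 this with h | h
    · exact Or.inl (Ideal.mem_colon_span_singleton.mpr h)
    · right
      rwa [colon_radical_of_primary hQ hx]

lemma annihilator_span_mk (J : Ideal A) (x : A) :
    (Submodule.span A {(Ideal.Quotient.mk J x : A ⧸ J)}).annihilator
      = J.colon (Ideal.span {x}) := by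
  ext a
  rw [Submodule.mem_annihilator_span_singleton, Ideal.mem_colon_span_singleton,
    ← Ideal.Quotient.mk_eq_mk, ← Submodule.Quotient.mk_smul, Submodule.Quotient.mk_eq_zero,
    smul_eq_mul]

end Aux

/-- With `K_s = ⋂_{p ∈ Ass(A/I^s) \ Min(I)} p` (equal to `A` if the index set is
empty), one has `ᵐI^(s) = I^s : K_s^∞`. -/
theorem minSymb_eq_saturation {A : Type*} [CommRing A] [IsNoetherianRing A]
    (I : Ideal A) (s : ℕ) (hs : 1 ≤ s) :
    minSymb I s =
      satur (I ^ s) (⨅ p ∈ associatedPrimes A (A ⧸ I ^ s) \ I.minimalPrimes, p) := by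
  classical
  set J := I ^ s with hJdef
  set S : Set (Ideal A) := associatedPrimes A (A ⧸ J) \ I.minimalPrimes with hSdef
  set K : Ideal A := ⨅ p ∈ S, p with hKdef
  -- a minimal primary decomposition of J
  obtain ⟨t, htJ, htP, htmin⟩ : ∃ t : Finset (Ideal A), t.inf id = J ∧
      (∀ ⦃Q : Ideal A⦄, Q ∈ t → Q.IsPrimary) ∧ ∀ ⦃Q : Ideal A⦄, Q ∈ t → ¬ (t.erase Q).inf id ≤ Q := by
    obtain ⟨t, ht⟩ := Submodule.IsLasker.exists_isMinimalPrimaryDecomposition (Submodule.isLasker A A) J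
    exact ⟨t, ht.inf_eq, ht.primary, ht.minimal⟩
  have hJle : ∀ Q ∈ t, J ≤ Q := fun Q hQ => htJ ▸ Finset.inf_le hQ
  -- colon of J is the inf of colons of the components
  have hcolinf : ∀ y : A, J.colon (Ideal.span {y}) = t.inf fun Q => Q.colon (Ideal.span {y}) := by
    intro y
    ext a
    simp only [Ideal.mem_colon_span_singleton, Submodule.mem_finsetInf, ← htJ, id_eq]
  -- each radical of a component is an associated prime of A/J
  have hass : ∀ Q ∈ t, IsAssociatedPrime Q.radical (A ⧸ J) := by
    intro Q hQ
    obtain ⟨x, hx1, hx2⟩ := SetLike.not_le_iff_exists.mp (htmin hQ)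
    have hcol : J.colon (Ideal.span {x}) = Q.colon (Ideal.span {x}) := by
      ext a
      simp only [Ideal.mem_colon_span_singleton]
      constructor
      · intro h
        exact Ideal.mem_colon_span_singleton.mp ((hcolinf x ▸ Finset.inf_le hQ)
          (Ideal.mem_colon_span_singleton.mpr h))
      · intro h
        rw [← htJ, Submodule.mem_finsetInf]
        intro R hR
        rcases eq_or_ne R Q with rfl | hne
        · exact h
        · have hleR : (t.erase Q).inf id ≤ R := Finset.inf_le (Finset.mem_erase.mpr ⟨hne, hR⟩)
          exact R.mul_mem_left a (hleR hx1)
    have hprim : (J.colon (Ideal.span {x})).IsPrimary :=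
      hcol ▸ colon_isPrimary_of_primary (htP hQ) hx2
    have hrad : (J.colon (Ideal.span {x})).radical = Q.radical := by
      rw [hcol]; exact colon_radical_of_primary (htP hQ) hx2
    -- the injection A/(J : x) → A/J
    let f : A →ₗ[A] A ⧸ J := LinearMap.toSpanSingleton A (A ⧸ J) (Ideal.Quotient.mk J x)
    have hker : LinearMap.ker f = J.colon (Ideal.span {x}) := by
      ext a
      rw [LinearMap.mem_ker, ← annihilator_span_mk J x,
        Submodule.mem_annihilator_span_singleton]
      exact Iff.rfl
    let g : (A ⧸ J.colon (Ideal.span {x})) →ₗ[A] A ⧸ J :=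
      Submodule.liftQ _ f hker.ge
    have hginj : Function.Injective g :=
      LinearMap.ker_eq_bot.mp (Submodule.ker_liftQ_eq_bot _ _ _ hker.le)
    have hmem : IsAssociatedPrime Q.radical (A ⧸ J.colon (Ideal.span {x})) := by
      have := associatedPrimes.eq_singleton_of_isPrimary hprim
      rw [hrad] at this
      exact (AssociatedPrimes.mem_iff).mp (this ▸ rfl)
    exact hmem.map_of_injective g hginj
  -- every associated prime of A/J is the radical of a component
  have hass' : ∀ p ∈ associatedPrimes A (A ⧸ J), ∃ Q ∈ t, p = Q.radical := by
    intro p hp'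
    obtain ⟨hp, y, hy⟩ := isAssociatedPrime_iff.mp hp'
    obtain ⟨x, rfl⟩ := Ideal.Quotient.mk_surjective (I := J) y
    rw [Submodule.bot_colon', annihilator_span_mk J x, hcolinf x] at hy
    obtain ⟨Q, hQ, hle⟩ := hp.prod_le.mp
      ((Ideal.prod_le_inf (s := t) (f := fun Q => Q.colon (Ideal.span {x}))).trans
        (hy ▸ le_rfl))
    have hpe : p = Q.colon (Ideal.span {x}) :=
      le_antisymm (hy ▸ Finset.inf_le hQ) hle
    have hx : x ∉ Q := by
      intro hxQ
      apply hp.ne_top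
      rw [hpe, eq_top_iff]
      exact fun a _ => Ideal.mem_colon_span_singleton.mpr (Q.mul_mem_left a hxQ)
    refine ⟨Q, hQ, ?_⟩
    have hr := colon_radical_of_primary (htP hQ) hx
    rw [← hpe] at hr
    exact hp.radical.symm.trans hr
  have hSfin : S.Finite :=
    Set.Finite.subset ((t : Set (Ideal A)).toFinite.image Ideal.radical)
      (fun p hp => by
        obtain ⟨Q, hQ, rfl⟩ := hass' p hp.1
        exact ⟨Q, hQ, rfl⟩)
  -- K is not contained in any minimal prime of I
  have hKnle : ∀ p ∈ I.minimalPrimes, ¬ K ≤ p := by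
    intro p hp hle
    haveI : p.IsPrime := hp.1.1
    have hK : hSfin.toFinset.inf id ≤ p := by
      rw [Finset.inf_id_eq_sInf, hSfin.coe_toFinset, sInf_eq_iInf]
      exact hle
    obtain ⟨q, hq, hqp⟩ := (Ideal.IsPrime.inf_le' ‹_›).mp hK
    rw [hSfin.mem_toFinset] at hq
    have hqprime : q.IsPrime := hq.1.1
    have hJq : J ≤ q := by
      refine le_trans ?_ hq.1.annihilator_le
      intro a ha
      rw [Submodule.mem_annihilator]
      rintro n -
      obtain ⟨b, rfl⟩ := Ideal.Quotient.mk_surjective (I := J) n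
      rw [← Ideal.Quotient.mk_eq_mk, ← Submodule.Quotient.mk_smul,
        Submodule.Quotient.mk_eq_zero, smul_eq_mul]
      exact J.mul_mem_right b ha
    have hIq : I ≤ q := by
      have h1 : I.radical ≤ q := by
        rw [← Ideal.radical_pow (I := I) (n := s) (Nat.one_le_iff_ne_zero.mp hs)]
        exact hqprime.radical_le_iff.mpr hJq
      exact le_trans Ideal.le_radical h1
    have e : q = p := le_antisymm hqp (hp.2 ⟨hqprime, hIq⟩ hqp)
    rw [e] at hq
    exact hq.2 hp
  have hKleS : ∀ q ∈ S, K ≤ q := fun q hq => biInf_le _ hq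
  apply le_antisymm
  · -- minSymb ≤ satur
    intro x hx
    have hxp : ∀ (p : Ideal A) (hp : p ∈ I.minimalPrimes),
        haveI : p.IsPrime := hp.1.1
        x ∈ locContract J p := fun p hp => (Submodule.mem_iInf _).mp hx ⟨p, hp⟩
    have key : ∀ Q : Ideal A, ∃ n : ℕ, Q ∈ t → K ^ n ≤ Q.colon (Ideal.span {x}) := by
      intro Q
      by_cases hQt : Q ∈ t
      · by_cases hxQ : x ∈ Q
        · exact ⟨0, fun _ a _ => Ideal.mem_colon_span_singleton.mpr (Q.mul_mem_left a hxQ)⟩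
        · have hKrad : K ≤ (Q.colon (Ideal.span {x})).radical := by
            rw [colon_radical_of_primary (htP hQt) hxQ]
            by_cases hmin : Q.radical ∈ I.minimalPrimes
            · exfalso
              haveI : Q.radical.IsPrime := hmin.1.1
              obtain ⟨u, hu, hux⟩ := (mem_locContract_iff J _ x).mp (hxp _ hmin)
              have hxu : x * u ∈ Q := by rw [mul_comm]; exact hJle Q hQt hux
              rcases (Ideal.isPrimary_iff.mp (htP hQt)).2 hxu with h | h
              · exact hxQ h
              · exact hu h
            · exact hKleS _ ⟨hass Q hQt, hmin⟩
          obtain ⟨n, hn⟩ :=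
            Ideal.exists_pow_le_of_le_radical_of_fg hKrad (IsNoetherian.noetherian K)
          exact ⟨n, fun _ => hn⟩
      · exact ⟨0, fun h => absurd h hQt⟩
    choose nf hnf using key
    set n : ℕ := t.sup nf with hndef
    have hKn : K ^ n ≤ J.colon (Ideal.span {x}) := by
      rw [hcolinf x, Finset.le_inf_iff]
      intro Q hQ
      exact le_trans (Ideal.pow_le_pow_right (Finset.le_sup hQ)) (hnf Q hQ)
    have : x ∈ J.colon ((K ^ n : Ideal A) : Set A) := by
      rw [Submodule.mem_colon]
      intro a ha
      rw [smul_eq_mul, mul_comm]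
      exact Ideal.mem_colon_span_singleton.mp (hKn ha)
    exact (le_iSup (fun m => J.colon ((K ^ m : Ideal A) : Set A)) n) this
  · -- satur ≤ minSymb
    rw [satur]
    refine iSup_le fun n => ?_
    intro x hx
    rw [minSymb, Submodule.mem_iInf]
    rintro ⟨p, hp⟩
    haveI : p.IsPrime := hp.1.1
    obtain ⟨u, huK, hup⟩ := SetLike.not_le_iff_exists.mp (hKnle p hp)
    refine (mem_locContract_iff J p x).mpr ⟨u ^ n, ?_, ?_⟩
    · exact fun h => hup (‹p.IsPrime›.mem_of_pow_mem n h)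
    · rw [mul_comm]
      exact Submodule.mem_colon.mp hx (u ^ n) (Ideal.pow_mem_pow huK n)
end

section
/- Let A be a Noetherian ring, I ⊆ A an ideal, and s ≥ 1. Set K_s = ⋂ p, where p ranges over the primes in Ass(A/I^s) with grade(p, A/I) ≥ 1 (and K_s = A if this set is empty). Then the associated-primes symbolic power satisfies ᵃI^(s) = I^s : K_s^∞. -/
open Ideal

/-- The "associated" symbolic power `ᵃI^(s) = ⋂_{p ∈ Ass(A/I)} (I^s A_p ∩ A)`. -/
noncomputable def assSymb {A : Type*} [CommRing A] (I : Ideal A) (s : ℕ) : Ideal A :=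
  ⨅ p : {p : Ideal A // p ∈ associatedPrimes A (A ⧸ I)},
    haveI : p.1.IsPrime := p.2.1
    locContract (I ^ s) p.1

section Aux

variable {A : Type*} [CommRing A]

lemma mem_locContract {I p : Ideal A} [p.IsPrime] {x : A} :
    x ∈ locContract I p ↔ ∃ u ∈ p.primeCompl, u * x ∈ I := by
  rw [locContract, Ideal.mem_comap, IsLocalization.mem_map_algebraMap_iff p.primeCompl]
  constructor
  · rintro ⟨⟨⟨i, hi⟩, u⟩, h⟩
    simp only at h
    have h0 : algebraMap A (Localization.AtPrime p) (x * u - i) = 0 := by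
      rw [_root_.map_sub, _root_.map_mul, h, sub_self]
    obtain ⟨v, hv⟩ := (IsLocalization.map_eq_zero_iff p.primeCompl _ _).mp h0
    refine ⟨v * u, p.primeCompl.mul_mem v.2 u.2, ?_⟩
    have h1 : (v : A) * (x * u - i) = 0 := hv
    have h2 : (v : A) * u * x = v * i := by linear_combination h1
    rw [h2]
    exact I.mul_mem_left _ hi
  · rintro ⟨u, hu, hux⟩
    refine ⟨⟨⟨u * x, hux⟩, ⟨u, hu⟩⟩, ?_⟩
    simp only [← _root_.map_mul]
    ring_nf

lemma ann_mk_eq_colon (J : Ideal A) (x : A) :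
    (Submodule.span A {(Ideal.Quotient.mk J x : A ⧸ J)}).annihilator = J.colon (span {x}) := by
  ext r
  rw [Submodule.mem_annihilator_span_singleton, Ideal.mem_colon_span_singleton]
  constructor
  · intro h
    have : Ideal.Quotient.mk J (r * x) = 0 := by
      rw [_root_.map_mul]
      simpa [Algebra.smul_def, Ideal.Quotient.algebraMap_eq] using h
    exact (Ideal.Quotient.eq_zero_iff_mem).mp this
  · intro h
    have : Ideal.Quotient.mk J (r * x) = 0 := (Ideal.Quotient.eq_zero_iff_mem).mpr h
    rw [_root_.map_mul] at this
    simpa [Algebra.smul_def, Ideal.Quotient.algebraMap_eq] using this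

lemma colon_bot_mk_eq_colon (J : Ideal A) (x : A) :
    Submodule.colon (⊥ : Submodule A (A ⧸ J)) {(Ideal.Quotient.mk J x : A ⧸ J)} =
      J.colon (span {x}) := by
  rw [← ann_mk_eq_colon]
  ext r
  rw [Submodule.mem_colon, Submodule.mem_annihilator_span_singleton]
  simp

lemma isAssociatedPrime_quotient_iff [IsNoetherianRing A] {J p : Ideal A} :
    IsAssociatedPrime p (A ⧸ J) ↔ p.IsPrime ∧ ∃ x : A, p = J.colon (span {x}) := by
  rw [isAssociatedPrime_iff]
  constructor
  · rintro ⟨hp, y, hy⟩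
    obtain ⟨x, rfl⟩ := Ideal.Quotient.mk_surjective y
    exact ⟨hp, x, by rw [hy, colon_bot_mk_eq_colon]⟩
  · rintro ⟨hp, x, hx⟩
    exact ⟨hp, Ideal.Quotient.mk J x, by rw [hx, colon_bot_mk_eq_colon]⟩

lemma colon_finset_inf (s : Finset (Ideal A)) (x : A) :
    (s.inf id).colon (span {x}) = s.inf (fun Q => Q.colon (span {x})) := by
  ext r
  simp only [Ideal.mem_colon_span_singleton, Submodule.mem_finsetInf, id_eq]

lemma associated_eq_radical_of_decomposition [IsNoetherianRing A] {J p : Ideal A}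
    (hp : IsAssociatedPrime p (A ⧸ J)) {s : Finset (Ideal A)}
    (hsJ : s.inf id = J) (hsP : ∀ ⦃Q⦄, Q ∈ s → Q.IsPrimary) :
    ∃ Q ∈ s, p = Q.radical := by
  obtain ⟨hprime, x, hx⟩ := isAssociatedPrime_quotient_iff.mp hp
  rw [← hsJ, colon_finset_inf] at hx
  obtain ⟨Q, hQs, hQle⟩ := (hprime.inf_le' (s := s)
    (f := fun Q => Q.colon (span {x}))).mp (le_of_eq hx.symm)
  have hxQ : x ∉ Q := by
    intro hxQ
    apply hprime.ne_top
    apply top_le_iff.mp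
    refine le_trans (fun r _ => ?_) hQle
    exact Ideal.mem_colon_span_singleton.mpr (Q.mul_mem_left r hxQ)
  refine ⟨Q, hQs, le_antisymm ?_ ?_⟩
  · intro r hr
    have hrp : r ∈ s.inf (fun Q => Q.colon (span {x})) := hx ▸ hr
    have h5 : s.inf (fun Q => Q.colon (span {x})) ≤ Q.colon (span {x}) :=
      Finset.inf_le hQs
    have hrx : r * x ∈ Q := Ideal.mem_colon_span_singleton.mp (h5 hrp)
    rcases (Ideal.isPrimary_iff.mp (hsP hQs)).2 (mul_comm r x ▸ hrx) with h | h
    · exact absurd h hxQ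
    · exact h
  · have hQp : Q ≤ p := le_trans
      (fun r hr => Ideal.mem_colon_span_singleton.mpr (Q.mul_mem_right x hr)) hQle
    calc Q.radical ≤ p.radical := Ideal.radical_mono hQp
    _ = p := hprime.radical

lemma finite_associatedPrimes [IsNoetherianRing A] (J : Ideal A) :
    (associatedPrimes A (A ⧸ J)).Finite := by
  obtain ⟨s, hsJ, hsP⟩ := Submodule.isLasker A A J
  apply Set.Finite.subset (s.finite_toSet.image Ideal.radical)
  intro p hp
  obtain ⟨Q, hQs, rfl⟩ := associated_eq_radical_of_decomposition hp hsJ hsP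
  exact Set.mem_image_of_mem _ hQs

/-- The multiplicative set `{u * a^n : u ∉ p}`. -/
def auxSubmonoid (p : Ideal A) [p.IsPrime] (a : A) : Submonoid A where
  carrier := { z | ∃ u ∈ p.primeCompl, ∃ n : ℕ, z = u * a ^ n }
  one_mem' := ⟨1, p.primeCompl.one_mem, 0, by ring⟩
  mul_mem' := by
    rintro z w ⟨u, hu, n, rfl⟩ ⟨v, hv, m, rfl⟩
    exact ⟨u * v, p.primeCompl.mul_mem hu hv, n + m, by ring⟩

lemma mem_associatedPrimes_of_mem_minimalPrimes [IsNoetherianRing A] {J p : Ideal A}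
    (hp : p ∈ J.minimalPrimes) : p ∈ associatedPrimes A (A ⧸ J) := by
  classical
  have hprime : p.IsPrime := hp.1.1
  haveI := hprime
  have hJp : J ≤ p := hp.1.2
  set J' := locContract J p with hJ'
  have h1 : J ≤ J' := fun a ha =>
    mem_locContract.mpr ⟨1, p.primeCompl.one_mem, by rwa [one_mul]⟩
  have h2 : J' ≤ p := by
    intro a ha
    obtain ⟨u, hu, hua⟩ := mem_locContract.mp ha
    rcases hprime.mem_or_mem (hJp hua) with h | h
    · exact absurd h hu
    · exact h
  have h3 : J'.radical = p := by
    refine le_antisymm (by simpa [hprime.radical] using Ideal.radical_mono h2) ?_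
    intro a ha
    by_contra hrad
    have hdisj : Disjoint (J : Set A) (auxSubmonoid p a : Set A) := by
      rw [Set.disjoint_left]
      rintro z hzJ ⟨u, hu, n, rfl⟩
      have hpow : a ^ n ∈ J' := mem_locContract.mpr ⟨u, hu, hzJ⟩
      exact hrad (Ideal.mem_radical_of_pow_mem (Ideal.le_radical hpow))
    obtain ⟨q, hqprime, hJq, hqdisj⟩ := Ideal.exists_le_prime_disjoint J (auxSubmonoid p a) hdisj
    have hqp : q ≤ p := by
      intro b hb
      by_contra hbp
      exact Set.disjoint_left.mp hqdisj hb ⟨b, hbp, 0, by ring⟩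
    have hpq : p ≤ q := hp.2 ⟨hqprime, hJq⟩ hqp
    exact Set.disjoint_left.mp hqdisj (hpq ha) ⟨1, p.primeCompl.one_mem, 1, by ring⟩
  have h4 : J'.IsPrimary := by
    rw [Ideal.isPrimary_iff]
    refine ⟨fun htop => hprime.ne_top (top_le_iff.mp (htop ▸ h2)), ?_⟩
    intro r b hrb
    by_cases hb : b ∈ J'.radical
    · exact Or.inr hb
    · left
      rw [h3] at hb
      obtain ⟨u, hu, hurb⟩ := mem_locContract.mp hrb
      refine mem_locContract.mpr ⟨u * b, p.primeCompl.mul_mem hu hb, ?_⟩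
      have : u * b * r = u * (r * b) := by ring
      rw [this]
      exact hurb
  have h5 : IsAssociatedPrime p (A ⧸ J') := by
    have := associatedPrimes.eq_singleton_of_isPrimary h4
    rw [h3] at this
    have hmem : p ∈ associatedPrimes A (A ⧸ J') := this ▸ rfl
    exact hmem
  obtain ⟨-, y, hy⟩ := isAssociatedPrime_quotient_iff.mp h5
  obtain ⟨G, hG⟩ : p.FG := IsNoetherian.noetherian p
  have hchoice : ∀ g ∈ G, ∃ u, u ∈ p.primeCompl ∧ u * (g * y) ∈ J := by
    intro g hg
    have hgp : g ∈ p := hG ▸ Submodule.subset_span hg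
    have : g * y ∈ J' := Ideal.mem_colon_span_singleton.mp (hy ▸ hgp)
    obtain ⟨u, hu, huJ⟩ := mem_locContract.mp this
    exact ⟨u, hu, huJ⟩
  choose w hw1 hw2 using hchoice
  set u : A := ∏ g ∈ G.attach, w g g.2 with hu_def
  have hu : u ∈ p.primeCompl := Submonoid.prod_mem _ (fun g _ => hw1 g g.2)
  refine isAssociatedPrime_quotient_iff.mpr ⟨hprime, u * y, le_antisymm ?_ ?_⟩
  · rw [← hG, Ideal.span_le]
    intro g hg
    rw [SetLike.mem_coe, Ideal.mem_colon_span_singleton]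
    have hsplit : w g hg * ∏ x ∈ G.attach.erase ⟨g, hg⟩, w x x.2 = u := by
      rw [hu_def]
      exact Finset.mul_prod_erase G.attach (fun x => w x.1 x.2)
        (Finset.mem_attach G ⟨g, hg⟩)
    have : g * (u * y) = (∏ x ∈ G.attach.erase ⟨g, hg⟩, w x x.2) * (w g hg * (g * y)) := by
      rw [← hsplit]; ring
    rw [this]
    exact J.mul_mem_left _ (hw2 g hg)
  · intro r hr
    rw [Ideal.mem_colon_span_singleton] at hr
    have : r * u * y ∈ J' := by
      have := h1 hr
      rwa [show r * (u * y) = r * u * y by ring] at this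
    have hru : r * u ∈ p := hy ▸ Ideal.mem_colon_span_singleton.mpr this
    rcases hprime.mem_or_mem hru with h | h
    · exact h
    · exact absurd h hu

lemma ass_colon_subset (I : Ideal A) (x : A) :
    associatedPrimes A (A ⧸ I.colon (span {x})) ⊆ associatedPrimes A (A ⧸ I) := by
  set J := I.colon (span {x}) with hJ
  let g : A →ₗ[A] A ⧸ I := LinearMap.toSpanSingleton A _ (Ideal.Quotient.mk I x)
  have hker : LinearMap.ker g = J := by
    ext a
    have : g a = Ideal.Quotient.mk I (a * x) := by
      show a • (Ideal.Quotient.mk I x) = _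
      rw [_root_.map_mul]
      rfl
    simp only [LinearMap.mem_ker, hJ, Ideal.mem_colon_span_singleton, smul_eq_mul, this,
      Ideal.Quotient.eq_zero_iff_mem]
  have hle : (J : Submodule A A) ≤ LinearMap.ker g := le_of_eq hker.symm
  let f : (A ⧸ J) →ₗ[A] A ⧸ I := Submodule.liftQ (J : Submodule A A) g hle
  have hinj : Function.Injective f := by
    rw [← LinearMap.ker_eq_bot]
    rw [Submodule.ker_liftQ_eq_bot _ _ _ (le_of_eq hker)]
  exact associatedPrimes.subset_of_injective hinj

lemma mem_satur_iff {I K : Ideal A} {x : A} :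
    x ∈ satur I K ↔ ∃ t : ℕ, K ^ t ≤ I.colon (span {x}) := by
  have hdir : Directed (· ≤ ·) (fun t : ℕ => I.colon ((K ^ t : Ideal A) : Set A)) := by
    intro t t'
    refine ⟨max t t', ?_, ?_⟩ <;>
      exact Submodule.colon_mono le_rfl (Ideal.pow_le_pow_right (by omega))
  rw [satur, ← SetLike.mem_coe, Submodule.coe_iSup_of_directed _ hdir, Set.mem_iUnion]
  constructor
  · rintro ⟨t, ht⟩
    refine ⟨t, fun k hk => ?_⟩
    rw [SetLike.mem_coe, Submodule.mem_colon] at ht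
    rw [Ideal.mem_colon_span_singleton, mul_comm]
    exact ht k hk
  · rintro ⟨t, ht⟩
    refine ⟨t, ?_⟩
    rw [SetLike.mem_coe, Submodule.mem_colon]
    intro k hk
    have := ht hk
    rw [Ideal.mem_colon_span_singleton] at this
    rwa [smul_eq_mul, mul_comm]

end Aux

/-- With `K_s = ⋂ p`, where `p` ranges over the associated primes of `A/I^s` containing
a nonzerodivisor on `A/I` (i.e. with `grade(p, A/I) ≥ 1`), and `K_s = A` if this set is
empty, one has `ᵃI^(s) = I^s : K_s^∞`. -/
theorem assSymb_eq_saturation {A : Type*} [CommRing A] [IsNoetherianRing A]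
    (I : Ideal A) (s : ℕ) (hs : 1 ≤ s) :
    assSymb I s =
      satur (I ^ s)
        (⨅ p ∈ {p | p ∈ associatedPrimes A (A ⧸ I ^ s) ∧
            ∃ x ∈ p, ∀ m : A ⧸ I, x • m = 0 → m = 0}, p) := by
  classical
  set S : Set (Ideal A) := {p | p ∈ associatedPrimes A (A ⧸ I ^ s) ∧
      ∃ x ∈ p, ∀ m : A ⧸ I, x • m = 0 → m = 0} with hS
  set K : Ideal A := ⨅ p ∈ S, p with hKdef
  have hfinS : S.Finite := (finite_associatedPrimes (I ^ s)).subset (fun p hp => hp.1)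
  -- a nonzerodivisor on A/I inside K
  obtain ⟨c, hcK, hcnzd⟩ : ∃ c, c ∈ K ∧ ∀ m : A ⧸ I, c • m = 0 → m = 0 := by
    set T := hfinS.toFinset with hT
    have hch : ∀ p ∈ T, ∃ z, z ∈ p ∧ ∀ m : A ⧸ I, z • m = 0 → m = 0 := by
      intro p hp
      obtain ⟨-, z, hz1, hz2⟩ := hfinS.mem_toFinset.mp hp
      exact ⟨z, hz1, hz2⟩
    choose z hz1 hz2 using hch
    refine ⟨∏ p ∈ T.attach, z p p.2, ?_, ?_⟩
    · rw [hKdef]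
      refine (Submodule.mem_iInf _).mpr (fun p => (Submodule.mem_iInf _).mpr (fun hp => ?_))
      have hpT : p ∈ T := hfinS.mem_toFinset.mpr hp
      have hsplit : z p hpT * ∏ x ∈ T.attach.erase ⟨p, hpT⟩, z x x.2
          = ∏ q ∈ T.attach, z q q.2 :=
        Finset.mul_prod_erase T.attach (fun x => z x.1 x.2) (Finset.mem_attach T ⟨p, hpT⟩)
      rw [← hsplit]
      exact p.mul_mem_right _ (hz1 p hpT)
    · refine Finset.prod_induction _ (fun a => ∀ m : A ⧸ I, a • m = 0 → m = 0) ?_ ?_ ?_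
      · intro a b ha hb m hm
        rw [mul_smul] at hm
        exact hb m (ha _ hm)
      · intro m hm
        rwa [one_smul] at hm
      · exact fun q _ => hz2 q q.2
  have hcpow : ∀ t : ℕ, ∀ m : A ⧸ I, c ^ t • m = 0 → m = 0 := by
    intro t
    induction t with
    | zero => intro m hm; rwa [pow_zero, one_smul] at hm
    | succ n ih =>
      intro m hm
      rw [pow_succ, mul_smul] at hm
      exact hcnzd m (ih _ hm)
  -- nonzerodivisors are not in associated primes of A/I
  have hnot : ∀ t : ℕ, ∀ q ∈ associatedPrimes A (A ⧸ I), c ^ t ∉ q := by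
    intro t q hq hcq
    obtain ⟨hqp, y, hy⟩ := isAssociatedPrime_iff.mp hq
    have hy0 : y ≠ 0 := by
      intro h0
      apply hqp.ne_top
      rw [hy, h0]
      ext r
      simp [Submodule.mem_colon]
    have : c ^ t • y = 0 := by
      have h := hy ▸ hcq
      simpa [Submodule.mem_colon] using h
    exact hy0 (hcpow t y this)
  apply le_antisymm
  · -- assSymb ≤ satur
    intro x hx
    have hx' : ∀ q (hq : q ∈ associatedPrimes A (A ⧸ I)),
        haveI : q.IsPrime := hq.1
        x ∈ locContract (I ^ s) q := by
      intro q hq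
      exact (Submodule.mem_iInf _).mp hx ⟨q, hq⟩
    set J : Ideal A := (I ^ s).colon (span {x}) with hJdef
    have hKrad : K ≤ J.radical := by
      rw [Ideal.radical_eq_sInf]
      refine le_sInf ?_
      rintro p₀ ⟨hJp₀, hp₀prime⟩
      haveI := hp₀prime
      obtain ⟨p, hpmin, hpp₀⟩ := Ideal.exists_minimalPrimes_le hJp₀
      haveI hpprime : p.IsPrime := hpmin.1.1
      refine le_trans ?_ hpp₀
      by_cases hgrade : ∃ z ∈ p, ∀ m : A ⧸ I, z • m = 0 → m = 0
      · have hpass : p ∈ associatedPrimes A (A ⧸ I ^ s) :=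
          ass_colon_subset (I ^ s) x (mem_associatedPrimes_of_mem_minimalPrimes hpmin)
        have hpS : p ∈ S := ⟨hpass, hgrade⟩
        exact iInf₂_le p hpS
      · exfalso
        push_neg at hgrade
        have hsub : (p : Set A) ⊆ ⋃ q ∈ associatedPrimes A (A ⧸ I), (q : Set A) := by
          rw [biUnion_associatedPrimes_eq_zero_divisors]
          intro a ha
          obtain ⟨m, hm1, hm2⟩ := hgrade a ha
          exact ⟨m, hm2, hm1⟩
        have hfinI := finite_associatedPrimes (A := A) I
        have hsub' : (p : Set A) ⊆ ⋃ q ∈ hfinI.toFinset, ((id q : Ideal A) : Set A) := by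
          refine hsub.trans ?_
          intro a ha
          rw [Set.mem_iUnion₂] at ha ⊢
          obtain ⟨q, hq, haq⟩ := ha
          exact ⟨q, hfinI.mem_toFinset.mpr hq, haq⟩
        obtain ⟨q, hqT, hpq⟩ := (Ideal.subset_union_prime (s := hfinI.toFinset)
          (f := id) ⊥ ⊥ (fun q hq _ _ => (hfinI.mem_toFinset.mp hq).1)).mp hsub'
        have hqass : q ∈ associatedPrimes A (A ⧸ I) := hfinI.mem_toFinset.mp hqT
        haveI := hqass.1
        obtain ⟨u, hu, hux⟩ := mem_locContract.mp (hx' q hqass)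
        have huJ : u ∈ J := Ideal.mem_colon_span_singleton.mpr hux
        exact hu (hpq (hpmin.1.2 huJ))
    obtain ⟨t, ht⟩ := Ideal.exists_pow_le_of_le_radical_of_fg hKrad (IsNoetherian.noetherian K)
    exact mem_satur_iff.mpr ⟨t, ht⟩
  · -- satur ≤ assSymb
    intro x hx
    obtain ⟨t, ht⟩ := mem_satur_iff.mp hx
    refine (Submodule.mem_iInf _).mpr ?_
    rintro ⟨q, hq⟩
    haveI := hq.1
    have hct : c ^ t ∈ K ^ t := Ideal.pow_mem_pow hcK t
    have hcx : c ^ t * x ∈ I ^ s := Ideal.mem_colon_span_singleton.mp (ht hct)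
    exact mem_locContract.mpr ⟨c ^ t, hnot t q hq, hcx⟩
end

section
/- Let k be a field, A and B Noetherian k-algebras with R = A ⊗_k B Noetherian, and let I ⊆ A, J ⊆ B be ideals (identified with their extensions to R). Then IR · JR = IR ∩ JR as ideals of R. -/
open TensorProduct Ideal LinearMap

set_option linter.unnecessarySimpa false

section Aux

variable {k A B : Type*} [Field k] [CommRing A] [CommRing B] [Algebra k A] [Algebra k B]

/-- The ideal of `A ⊗[k] B` given by the image of `I ⊗ B`. -/
noncomputable def idealLAux (k : Type*) {A : Type*} (B : Type*) [Field k] [CommRing A]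
    [CommRing B] [Algebra k A] [Algebra k B] (I : Ideal A) : Ideal (A ⊗[k] B) where
  carrier := LinearMap.range (rTensor B (I.restrictScalars k).subtype)
  add_mem' := add_mem
  zero_mem' := zero_mem _
  smul_mem' := by
    intro c x hx
    obtain ⟨y, rfl⟩ := hx
    induction c using TensorProduct.induction_on with
    | zero => simpa using zero_mem _
    | tmul a' b' =>
      induction y using TensorProduct.induction_on with
      | zero => simpa using zero_mem _
      | tmul a b =>
        refine ⟨(⟨a' * a.1, I.mul_mem_left a' a.2⟩ : I.restrictScalars k) ⊗ₜ (b' * b), ?_⟩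
        simp [Algebra.TensorProduct.tmul_mul_tmul]
      | add y z hy hz =>
        rw [map_add, smul_add]
        exact add_mem hy hz
    | add c d hc hd =>
      rw [add_smul]
      exact add_mem hc hd

/-- The ideal of `A ⊗[k] B` given by the image of `A ⊗ J`. -/
noncomputable def idealRAux (k A : Type*) {B : Type*} [Field k] [CommRing A]
    [CommRing B] [Algebra k A] [Algebra k B] (J : Ideal B) : Ideal (A ⊗[k] B) where
  carrier := LinearMap.range (lTensor A (J.restrictScalars k).subtype)
  add_mem' := add_mem
  zero_mem' := zero_mem _
  smul_mem' := by
    intro c x hx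
    obtain ⟨y, rfl⟩ := hx
    induction c using TensorProduct.induction_on with
    | zero => simpa using zero_mem _
    | tmul a' b' =>
      induction y using TensorProduct.induction_on with
      | zero => simpa using zero_mem _
      | tmul a b =>
        refine ⟨(a' * a) ⊗ₜ (⟨b' * b.1, J.mul_mem_left b' b.2⟩ : J.restrictScalars k), ?_⟩
        simp [Algebra.TensorProduct.tmul_mul_tmul]
      | add y z hy hz =>
        rw [map_add, smul_add]
        exact add_mem hy hz
    | add c d hc hd =>
      rw [add_smul]
      exact add_mem hc hd

/-- The ideal of `A ⊗[k] B` given by the image of `I ⊗ J`. -/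
noncomputable def idealMAux (k : Type*) {A B : Type*} [Field k] [CommRing A]
    [CommRing B] [Algebra k A] [Algebra k B] (I : Ideal A) (J : Ideal B) :
    Ideal (A ⊗[k] B) where
  carrier := LinearMap.range
    (TensorProduct.map (I.restrictScalars k).subtype (J.restrictScalars k).subtype)
  add_mem' := add_mem
  zero_mem' := zero_mem _
  smul_mem' := by
    intro c x hx
    obtain ⟨y, rfl⟩ := hx
    induction c using TensorProduct.induction_on with
    | zero => simpa using zero_mem _
    | tmul a' b' =>
      induction y using TensorProduct.induction_on with
      | zero => simpa using zero_mem _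
      | tmul a b =>
        refine ⟨(⟨a' * a.1, I.mul_mem_left a' a.2⟩ : I.restrictScalars k) ⊗ₜ
          (⟨b' * b.1, J.mul_mem_left b' b.2⟩ : J.restrictScalars k), ?_⟩
        simp [Algebra.TensorProduct.tmul_mul_tmul]
      | add y z hy hz =>
        rw [map_add, smul_add]
        exact add_mem hy hz
    | add c d hc hd =>
      rw [add_smul]
      exact add_mem hc hd

/-- Over a field, `(I ⊗ B) ⊓ (A ⊗ J) ≤ im (I ⊗ J)`. -/
theorem inf_le_range_map (I : Ideal A) (J : Ideal B) :
    LinearMap.range (rTensor B (I.restrictScalars k).subtype) ⊓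
      LinearMap.range (lTensor A (J.restrictScalars k).subtype) ≤
    LinearMap.range
      (TensorProduct.map (I.restrictScalars k).subtype (J.restrictScalars k).subtype) := by
  set P := I.restrictScalars k
  set Q := J.restrictScalars k
  rintro x ⟨⟨y, rfl⟩, hx⟩
  -- x = rTensor P.subtype y ∈ range (lTensor Q.subtype) = ker (lTensor Q.mkQ)
  have hexA : Function.Exact (lTensor A Q.subtype) (lTensor A Q.mkQ) :=
    Module.Flat.lTensor_exact A (LinearMap.exact_subtype_mkQ Q)
  have h0 : lTensor A Q.mkQ (rTensor B P.subtype y) = 0 := by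
    rw [LinearMap.exact_iff] at hexA
    rw [← LinearMap.mem_ker, hexA]
    exact hx
  have hcomm : lTensor A Q.mkQ (rTensor B P.subtype y) =
      rTensor (B ⧸ Q) P.subtype (lTensor (↥P) Q.mkQ y) := by
    rw [← LinearMap.comp_apply, ← LinearMap.comp_apply,
      LinearMap.lTensor_comp_rTensor, LinearMap.rTensor_comp_lTensor]
  have hinj : Function.Injective (rTensor (B ⧸ Q) P.subtype) :=
    Module.Flat.rTensor_preserves_injective_linearMap _ P.injective_subtype
  have hy0 : lTensor (↥P) Q.mkQ y = 0 := by
    apply hinj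
    rw [← hcomm, h0, map_zero]
  have hexP : Function.Exact (lTensor (↥P) Q.subtype) (lTensor (↥P) Q.mkQ) :=
    Module.Flat.lTensor_exact (↥P) (LinearMap.exact_subtype_mkQ Q)
  obtain ⟨z, hz⟩ := (hexP _).mp hy0
  refine ⟨z, ?_⟩
  rw [← LinearMap.rTensor_comp_lTensor, LinearMap.comp_apply, hz]

end Aux

/-- Extension of an ideal of `A` to `A ⊗[k] B`. -/
noncomputable def extL (k : Type*) {A : Type*} (B : Type*) [Field k] [CommRing A] [CommRing B]
    [Algebra k A] [Algebra k B] (I : Ideal A) : Ideal (A ⊗[k] B) :=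
  I.map (Algebra.TensorProduct.includeLeft : A →ₐ[k] A ⊗[k] B)

/-- Extension of an ideal of `B` to `A ⊗[k] B`. -/
noncomputable def extR (k A : Type*) {B : Type*} [Field k] [CommRing A] [CommRing B]
    [Algebra k A] [Algebra k B] (J : Ideal B) : Ideal (A ⊗[k] B) :=
  J.map (Algebra.TensorProduct.includeRight : B →ₐ[k] A ⊗[k] B)

section Eq

variable {k A B : Type*} [Field k] [CommRing A] [CommRing B] [Algebra k A] [Algebra k B]

theorem extL_eq (I : Ideal A) : extL k B I = idealLAux k B I := by
  apply le_antisymm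
  · rw [extL, Ideal.map_le_iff_le_comap]
    intro a ha
    exact ⟨(⟨a, ha⟩ : I.restrictScalars k) ⊗ₜ 1, rfl⟩
  · rintro x ⟨y, rfl⟩
    induction y using TensorProduct.induction_on with
    | zero => simpa using zero_mem _
    | tmul a b =>
      have : rTensor B (I.restrictScalars k).subtype (a ⊗ₜ b) =
          (1 ⊗ₜ b) * (a.1 ⊗ₜ 1 : A ⊗[k] B) := by
        simp [Algebra.TensorProduct.tmul_mul_tmul]
      rw [this]
      exact Ideal.mul_mem_left _ _ (Ideal.mem_map_of_mem _ a.2)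
    | add y z hy hz =>
      rw [map_add]
      exact add_mem hy hz

theorem extR_eq (J : Ideal B) : extR k A J = idealRAux k A J := by
  apply le_antisymm
  · rw [extR, Ideal.map_le_iff_le_comap]
    intro b hb
    exact ⟨1 ⊗ₜ (⟨b, hb⟩ : J.restrictScalars k), rfl⟩
  · rintro x ⟨y, rfl⟩
    induction y using TensorProduct.induction_on with
    | zero => simpa using zero_mem _
    | tmul a b =>
      have : lTensor A (J.restrictScalars k).subtype (a ⊗ₜ b) =
          (a ⊗ₜ 1) * (1 ⊗ₜ b.1 : A ⊗[k] B) := by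
        simp [Algebra.TensorProduct.tmul_mul_tmul]
      rw [this]
      exact Ideal.mul_mem_left _ _ (Ideal.mem_map_of_mem _ b.2)
    | add y z hy hz =>
      rw [map_add]
      exact add_mem hy hz

theorem extL_mul_extR_eq (I : Ideal A) (J : Ideal B) :
    extL k B I * extR k A J = idealMAux k I J := by
  apply le_antisymm
  · rw [Ideal.mul_le]
    intro r hr s hs
    rw [extL_eq] at hr
    rw [extR_eq] at hs
    obtain ⟨y, rfl⟩ := hr
    obtain ⟨z, rfl⟩ := hs
    induction y using TensorProduct.induction_on with
    | zero => simpa using zero_mem _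
    | tmul a b =>
      induction z using TensorProduct.induction_on with
      | zero => simpa using zero_mem _
      | tmul a' b' =>
        refine ⟨(⟨a.1 * a', I.mul_mem_right a' a.2⟩ : I.restrictScalars k) ⊗ₜ
          (⟨b * b'.1, J.mul_mem_left b b'.2⟩ : J.restrictScalars k), ?_⟩
        simp [Algebra.TensorProduct.tmul_mul_tmul]
      | add z w hz hw =>
        rw [map_add, mul_add]
        exact add_mem hz hw
    | add y w hy hw =>
      rw [map_add, add_mul]
      exact add_mem hy hw
  · rintro x ⟨y, rfl⟩
    induction y using TensorProduct.induction_on with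
    | zero => simpa using zero_mem _
    | tmul a b =>
      have : TensorProduct.map (I.restrictScalars k).subtype (J.restrictScalars k).subtype
          (a ⊗ₜ b) = (a.1 ⊗ₜ (1 : B)) * ((1 : A) ⊗ₜ b.1 : A ⊗[k] B) := by
        simp [Algebra.TensorProduct.tmul_mul_tmul]
      rw [this]
      exact Ideal.mul_mem_mul (Ideal.mem_map_of_mem _ a.2) (Ideal.mem_map_of_mem _ b.2)
    | add y z hy hz =>
      rw [map_add]
      exact add_mem hy hz

end Eq

theorem extL_mul_extR_eq_inf {k A B : Type*} [Field k] [CommRing A] [CommRing B]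
    [Algebra k A] [Algebra k B] [IsNoetherianRing A] [IsNoetherianRing B]
    [IsNoetherianRing (A ⊗[k] B)] (I : Ideal A) (J : Ideal B) :
    extL k B I * extR k A J = extL k B I ⊓ extR k A J := by
  apply le_antisymm
  · exact Ideal.mul_le_inf
  · intro x hx
    rw [extL_eq] at hx
    rw [extR_eq] at hx
    rw [extL_mul_extR_eq]
    exact inf_le_range_map I J ⟨hx.1, hx.2⟩
end

section
/- Let k be a field, A and B Noetherian k-algebras with R = A ⊗_k B Noetherian. Let I, K ⊆ A and J ⊆ B be ideals. Then in R, (IR + JR) ∩ (KR + JR) = (I ∩ K)R + JR. -/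
/-!
The ideal `JR` is the kernel of the surjection `A ⊗[k] B → A ⊗[k] (B ⧸ J)` (right exactness of
`⊗`), so both sides are preimages of ideals of `A ⊗[k] (B ⧸ J)`, and the claim reduces to
`IR' ∩ KR' = (I ∩ K)R'` in `R' = A ⊗[k] (B ⧸ J)`. Since `B ⧸ J` is a free `k`-module, `R'` is a
free `A`-module, and in a basis an element lies in `IR'` iff all its coordinates lie in `I`;
hence extension to `R'` commutes with intersections.
-/

open TensorProduct Ideal

theorem Module.Basis.mem_ideal_smul_top_iff {R M ι : Type*} [CommRing R] [AddCommGroup M]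
    [Module R M] (b : Module.Basis ι R M) (I : Ideal R) (x : M) :
    x ∈ I • (⊤ : Submodule R M) ↔ ∀ i, b.repr x i ∈ I := by
  refine ⟨fun hx => ?_, fun hx => ?_⟩
  · refine Submodule.smul_induction_on (p := fun x => ∀ i, b.repr x i ∈ I) hx ?_ ?_
    · intro r hr n _ i
      simpa using I.mul_mem_right (b.repr n i) hr
    · intro x y hx hy i
      simpa using I.add_mem (hx i) (hy i)
  · rw [← b.linearCombination_repr x, Finsupp.linearCombination_apply]
    exact Submodule.sum_mem _ fun i _ => Submodule.smul_mem_smul (hx i) trivial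

theorem Ideal.mem_map_algebraMap_iff_basis_repr {R S ι : Type*} [CommRing R] [CommRing S]
    [Algebra R S] (b : Module.Basis ι R S) (I : Ideal R) (x : S) :
    x ∈ I.map (algebraMap R S) ↔ ∀ i, b.repr x i ∈ I := by
  rw [← Submodule.restrictScalars_mem R, ← smul_top_eq_map, b.mem_ideal_smul_top_iff]

theorem Ideal.map_algebraMap_inf_of_free {R S : Type*} [CommRing R] [CommRing S] [Algebra R S]
    [Module.Free R S] (I K : Ideal R) :
    (I ⊓ K).map (algebraMap R S) = I.map (algebraMap R S) ⊓ K.map (algebraMap R S) := by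
  ext x
  simp only [Submodule.mem_inf, mem_map_algebraMap_iff_basis_repr (Module.Free.chooseBasis R S),
    forall_and]

theorem extL_inf {k A C : Type*} [Field k] [CommRing A] [CommRing C] [Algebra k A]
    [Algebra k C] (I K : Ideal A) : extL k C (I ⊓ K) = extL k C I ⊓ extL k C K :=
  map_algebraMap_inf_of_free I K

theorem comap_extL_eq_extL_add_extR {k A B : Type*} [Field k] [CommRing A] [CommRing B]
    [Algebra k A] [Algebra k B] (J : Ideal B) (L : Ideal A) :
    (extL k (B ⧸ J) L).comap (Algebra.TensorProduct.map (AlgHom.id k A) (Quotient.mkₐ k J)) =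
      extL k B L + extR k A J := by
  set f := Algebra.TensorProduct.map (AlgHom.id k A) (Quotient.mkₐ k J)
  have hsurj : Function.Surjective f :=
    LinearMap.lTensor_surjective A (Quotient.mkₐ_surjective k J)
  have hker : RingHom.ker f = extR k A J := by
    rw [Algebra.TensorProduct.lTensor_ker _ (Quotient.mkₐ_surjective k J),
      ← RingHom.ker_coe_toRingHom, Quotient.mkₐ_ker, extR]
  have hmap : (extL k B L).map f = extL k (B ⧸ J) L := by
    rw [extL, extL, map_mapₐ, Algebra.TensorProduct.map_comp_includeLeft, AlgHom.comp_id]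
  rw [← hmap, comap_map_of_surjective f hsurj, ← RingHom.ker_eq_comap_bot, hker,
    ← Ideal.add_eq_sup]

theorem inf_sum_eq_general {k A B : Type*} [Field k] [CommRing A] [CommRing B]
    [Algebra k A] [Algebra k B] (I K : Ideal A) (J : Ideal B) :
    (extL k B I + extR k A J) ⊓ (extL k B K + extR k A J) =
      extL k B (I ⊓ K) + extR k A J := by
  rw [← comap_extL_eq_extL_add_extR, ← comap_extL_eq_extL_add_extR,
    ← comap_extL_eq_extL_add_extR, ← comap_inf, extL_inf]

/-- `(I+J) ∩ (K+J) = (I ∩ K) + J` for ideals `I, K ⊆ A` and `J ⊆ B`, extended to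
`R = A ⊗[k] B`. -/
theorem inf_sum_eq {k A B : Type*} [Field k] [CommRing A] [CommRing B]
    [Algebra k A] [Algebra k B] [IsNoetherianRing A] [IsNoetherianRing B]
    [IsNoetherianRing (A ⊗[k] B)] (I K : Ideal A) (J : Ideal B) :
    (extL k B I + extR k A J) ⊓ (extL k B K + extR k A J) =
      extL k B (I ⊓ K) + extR k A J :=
  inf_sum_eq_general I K J
end

section
/- Let k be a field, A and B Noetherian k-algebras with R = A ⊗_k B Noetherian. Let {I_i}_{i≥0} be a descending filtration of ideals of A and {J_j}_{j≥0} a descending filtration of ideals of B (so I_{i+1} ⊆ I_i, J_{j+1} ⊆ J_j). Then for all s ≥ 1, in R: J_1 ∩ (Σ_{i=0}^{s-2} I_i J_{s-i} + I_{s-1}) = Σ_{i=0}^{s-1} I_i J_{s-i}. -/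
open TensorProduct Ideal

/-!
The key point is that over a field, extensions from the two factors meet in their product:
`IR ∩ JR = IR · JR`. This is exactness of `I ⊗ B → A ⊗ B → (A/I) ⊗ B` combined with flatness
of `A/I`. Since the partial sum `Σ_{i ≤ s-2} Iᵢ J_{s-i}` lies in `J₁R` (the filtration `J` is
descending), the modular law reduces the theorem to `J₁R ∩ I_{s-1}R = I_{s-1}R · J₁R`.
-/

section TensorSubmodule

variable {k M N : Type*} [CommRing k] [AddCommGroup M] [Module k M] [AddCommGroup N] [Module k N]

theorem range_rTensor_subtype_inf_range_lTensor_subtype (M' : Submodule k M) (N' : Submodule k N)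
    [Module.Flat k (M ⧸ M')] :
    LinearMap.range (LinearMap.rTensor N M'.subtype) ⊓
        LinearMap.range (LinearMap.lTensor M N'.subtype) =
      LinearMap.range (TensorProduct.map M'.subtype N'.subtype) := by
  refine le_antisymm ?_ (le_inf ?_ ?_)
  · rintro _ ⟨hx, y, rfl⟩
    have hcomm : LinearMap.rTensor N M'.mkQ (LinearMap.lTensor M N'.subtype y) =
        LinearMap.lTensor (M ⧸ M') N'.subtype (LinearMap.rTensor N' M'.mkQ y) := by
      rw [← LinearMap.comp_apply, LinearMap.rTensor_comp_lTensor,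
        ← LinearMap.lTensor_comp_rTensor, LinearMap.comp_apply]
    have hker : LinearMap.rTensor N' M'.mkQ y = 0 := by
      refine Module.Flat.lTensor_preserves_injective_linearMap _ N'.injective_subtype ?_
      rw [← hcomm, map_zero, ← LinearMap.mem_ker, rTensor_mkQ]
      exact hx
    obtain ⟨z, rfl⟩ : y ∈ LinearMap.range (LinearMap.rTensor N' M'.subtype) := by
      rw [← rTensor_mkQ, LinearMap.mem_ker]
      exact hker
    exact ⟨z, by rw [← LinearMap.comp_apply, LinearMap.lTensor_comp_rTensor]⟩
  · rw [← LinearMap.rTensor_comp_lTensor, LinearMap.range_comp]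
    exact LinearMap.map_le_range
  · rw [← LinearMap.lTensor_comp_rTensor, LinearMap.range_comp]
    exact LinearMap.map_le_range

end TensorSubmodule

section TensorIdeal

variable {k A B : Type*} [Field k] [CommRing A] [CommRing B] [Algebra k A] [Algebra k B]

theorem range_map_subtype_le_extL_mul_extR (I : Ideal A) (J : Ideal B) :
    LinearMap.range (TensorProduct.map (I.restrictScalars k).subtype (J.restrictScalars k).subtype)
      ≤ (extL k B I * extR k A J).restrictScalars k := by
  rintro _ ⟨z, rfl⟩
  induction z with
  | zero => exact zero_mem _
  | tmul i j =>
    have hij : (i : A) ⊗ₜ[k] (j : B) = ((i : A) ⊗ₜ[k] (1 : B)) * ((1 : A) ⊗ₜ[k] (j : B)) := by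
      simp [Algebra.TensorProduct.tmul_mul_tmul]
    rw [TensorProduct.map_tmul]
    exact hij ▸ mul_mem_mul (mem_map_of_mem _ i.2) (mem_map_of_mem _ j.2)
  | add u v hu hv => rw [map_add]; exact add_mem hu hv

theorem extR_mono : Monotone (extR k A : Ideal B → Ideal (A ⊗[k] B)) :=
  fun _ _ h => Ideal.map_mono h

theorem extL_inf_extR (I : Ideal A) (J : Ideal B) :
    extL k B I ⊓ extR k A J = extL k B I * extR k A J := by
  refine le_antisymm ?_ mul_le_inf
  rw [← Submodule.restrictScalars_le k, Submodule.restrictScalars_inf, extL, extR,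
    map_includeLeft_eq, map_includeRight_eq, range_rTensor_subtype_inf_range_lTensor_subtype]
  exact range_map_subtype_le_extL_mul_extR I J

end TensorIdeal

theorem inf_binom_sum_one_general {k A B : Type*} [Field k] [CommRing A] [CommRing B]
    [Algebra k A] [Algebra k B]
    (I : ℕ → Ideal A) (J : ℕ → Ideal B)
    (hJ : ∀ j, J (j + 1) ≤ J j)
    (s : ℕ) (hs : 1 ≤ s) :
    extR k A (J 1) ⊓
        ((∑ i ∈ Finset.range (s - 1), extL k B (I i) * extR k A (J (s - i))) +
          extL k B (I (s - 1))) =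
      ∑ i ∈ Finset.range s, extL k B (I i) * extR k A (J (s - i)) := by
  obtain ⟨n, rfl⟩ : ∃ n, s = n + 1 := ⟨s - 1, by omega⟩
  have hS : ∑ i ∈ Finset.range n, extL k B (I i) * extR k A (J (n + 1 - i)) ≤ extR k A (J 1) := by
    rw [Ideal.sum_eq_sup]
    refine Finset.sup_le fun i hi => Ideal.mul_le_right.trans (extR_mono ?_)
    exact antitone_nat_of_succ_le hJ (by rw [Finset.mem_range] at hi; omega)
  rw [Nat.add_sub_cancel, Finset.sum_range_succ, Nat.add_sub_cancel_left, Ideal.add_eq_sup,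
    Ideal.add_eq_sup, inf_comm, sup_inf_assoc_of_le _ hS, extL_inf_extR]

/-- For descending filtrations `{Iᵢ}` of ideals of `A` and `{Jⱼ}` of ideals of `B`, in
`R = A ⊗[k] B` one has
`J₁ ∩ (Σ_{i=0}^{s-2} Iᵢ J_{s-i} + I_{s-1}) = Σ_{i=0}^{s-1} Iᵢ J_{s-i}`. -/
theorem inf_binom_sum_one {k A B : Type*} [Field k] [CommRing A] [CommRing B]
    [Algebra k A] [Algebra k B] [IsNoetherianRing A] [IsNoetherianRing B]
    [IsNoetherianRing (A ⊗[k] B)]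
    (I : ℕ → Ideal A) (J : ℕ → Ideal B)
    (hI : ∀ i, I (i + 1) ≤ I i) (hJ : ∀ j, J (j + 1) ≤ J j)
    (s : ℕ) (hs : 1 ≤ s) :
    extR k A (J 1) ⊓
        ((∑ i ∈ Finset.range (s - 1), extL k B (I i) * extR k A (J (s - i))) +
          extL k B (I (s - 1))) =
      ∑ i ∈ Finset.range s, extL k B (I i) * extR k A (J (s - i)) :=
  inf_binom_sum_one_general I J hJ s hs
end

section
/- Let k be a field, A and B Noetherian k-algebras with R = A ⊗_k B Noetherian. Let {I_i} and {K_i} be descending filtrations of ideals in A with I_0 = K_0 = A, and {J_j} a descending filtration of ideals in B with J_0 = B. Then for all s ≥ 1: (Σ_{i=0}^s I_i J_{s-i}) ∩ (Σ_{i=0}^s K_i J_{s-i}) = Σ_{i=0}^s (I_i ∩ K_i) J_{s-i}, as ideals of R. -/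
open TensorProduct Ideal

namespace InfBinomAux

section GeneralHelpers

variable {R M : Type*} [Semiring R] [AddCommMonoid M] [Module R M]

theorem ideal_sum_le {ι : Type*} {t : Finset ι} {p : ι → Submodule R M} {q : Submodule R M}
    (h : ∀ i ∈ t, p i ≤ q) : (∑ i ∈ t, p i) ≤ q := by
  classical
  induction t using Finset.induction_on with
  | empty => simp
  | insert _ _ hx ih =>
    rename_i a t'
    rw [Finset.sum_insert hx, Submodule.add_eq_sup]
    exact sup_le (h a (Finset.mem_insert_self a t'))
      (ih fun i hi => h i (Finset.mem_insert_of_mem hi))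

theorem ideal_le_sum {ι : Type*} {t : Finset ι} {p : ι → Submodule R M} {i : ι}
    (hi : i ∈ t) : p i ≤ ∑ j ∈ t, p j := by
  classical
  rw [← Finset.sum_erase_add _ _ hi, Submodule.add_eq_sup]
  exact le_sup_right

end GeneralHelpers

open Submodule

section Key

variable {k M N : Type*} [Field k] [AddCommGroup M] [Module k M]
  [AddCommGroup N] [Module k N]

/-- Tensor product of two subspaces inside `M ⊗[k] N`. -/
noncomputable def tp (X : Submodule k M) (Y : Submodule k N) : Submodule k (M ⊗[k] N) :=
  Submodule.map₂ (TensorProduct.mk k M N) X Y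

theorem tmul_mem_tp {X : Submodule k M} {Y : Submodule k N} {m : M} {n : N}
    (hm : m ∈ X) (hn : n ∈ Y) : m ⊗ₜ[k] n ∈ tp X Y :=
  Submodule.apply_mem_map₂ _ hm hn

theorem tp_mono {X X' : Submodule k M} {Y Y' : Submodule k N} (h1 : X ≤ X') (h2 : Y ≤ Y') :
    tp X Y ≤ tp X' Y' := by
  unfold tp; exact Submodule.map₂_le_map₂ h1 h2

theorem tp_bot_right (X : Submodule k M) : tp X (⊥ : Submodule k N) = ⊥ := by
  unfold tp; exact Submodule.map₂_bot_right _ _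


theorem sum_le_submodule {P' : Type*} [AddCommGroup P'] [Module k P'] {ι : Type*}
    {t : Finset ι} {p : ι → Submodule k P'} {q : Submodule k P'}
    (h : ∀ i ∈ t, p i ≤ q) : (∑ i ∈ t, p i) ≤ q := by
  classical
  induction t using Finset.induction_on with
  | empty => simp
  | insert _ _ hx ih =>
    rename_i a s
    rw [Finset.sum_insert hx, Submodule.add_eq_sup]
    exact sup_le (h a (Finset.mem_insert_self a s))
      (ih fun i hi => h i (Finset.mem_insert_of_mem hi))

theorem le_sum_submodule {P' : Type*} [AddCommGroup P'] [Module k P'] {ι : Type*}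
    {t : Finset ι} {p : ι → Submodule k P'} {i : ι}
    (hi : i ∈ t) : p i ≤ ∑ j ∈ t, p j := by
  classical
  rw [← Finset.sum_erase_add _ _ hi, Submodule.add_eq_sup]
  exact le_sup_right

theorem map_sum_submodule {P' P'' : Type*} [AddCommGroup P'] [Module k P']
    [AddCommGroup P''] [Module k P''] (f : P' →ₗ[k] P'') {ι : Type*} (t : Finset ι)
    (p : ι → Submodule k P') :
    (∑ i ∈ t, p i).map f = ∑ i ∈ t, (p i).map f := by
  classical
  induction t using Finset.induction_on with
  | empty => simp
  | insert _ _ hx ih =>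
    rename_i a s
    rw [Finset.sum_insert hx, Finset.sum_insert hx, Submodule.add_eq_sup,
      Submodule.add_eq_sup, Submodule.map_sup, ih]

theorem key_inf (X Y : Submodule k M) (D : Submodule k N) :
    tp X D ⊓ tp Y D ≤ tp (X ⊓ Y) D := by
  classical
  obtain ⟨E, hE⟩ := Submodule.exists_isCompl D
  set bD := Module.Basis.ofVectorSpace k D with hbD
  set bE := Module.Basis.ofVectorSpace k E with hbE
  set b : Module.Basis _ k N := (bD.prod bE).map (Submodule.prodEquivOfIsCompl D E hE) with hb
  set e := TensorProduct.equivFinsuppOfBasisRight (M := M) b with he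
  have h1 : ∀ (Z : Submodule k M), ∀ x ∈ tp Z D, ∀ t, e x t ∈ Z := by
    intro Z x hx t
    refine Submodule.map₂_le (f := TensorProduct.mk k M N)
      (r := Z.comap ((Finsupp.lapply t : (_ →₀ M) →ₗ[k] M) ∘ₗ e.toLinearMap)) |>.2
      ?_ hx
    intro m hm n hn
    simp only [Submodule.mem_comap, LinearMap.coe_comp, LinearEquiv.coe_coe,
      Function.comp_apply, Finsupp.lapply_apply, TensorProduct.mk_apply, he,
      TensorProduct.equivFinsuppOfBasisRight_apply_tmul_apply]
    exact Z.smul_mem _ hm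
  have hrepr : ∀ n ∈ D, ∀ t, b.repr n (Sum.inr t) = 0 := by
    intro n hn t
    rw [hb, Module.Basis.map_repr]
    simp only [LinearEquiv.trans_apply]
    rw [Module.Basis.prod_repr_inr]
    have : ((Submodule.prodEquivOfIsCompl D E hE).symm n).2 = 0 :=
      (Submodule.prodEquivOfIsCompl_symm_apply_snd_eq_zero (p := D) (q := E) hE).2 hn
    rw [this, map_zero, Finsupp.zero_apply]
  have h2 : ∀ x ∈ tp X D, ∀ t, e x (Sum.inr t) = 0 := by
    intro x hx t
    refine Submodule.map₂_le (f := TensorProduct.mk k M N)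
      (r := (⊥ : Submodule k M).comap
        ((Finsupp.lapply (Sum.inr t) : (_ →₀ M) →ₗ[k] M) ∘ₗ e.toLinearMap)) |>.2
      ?_ hx
    intro m hm n hn
    simp only [Submodule.mem_comap, LinearMap.coe_comp, LinearEquiv.coe_coe,
      Function.comp_apply, Finsupp.lapply_apply, TensorProduct.mk_apply, he,
      TensorProduct.equivFinsuppOfBasisRight_apply_tmul_apply, Submodule.mem_bot]
    rw [hrepr n hn t, zero_smul]
  rintro x ⟨hxX, hxY⟩
  have hx' : x = (e x).sum fun t m => m ⊗ₜ[k] b t := by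
    conv_lhs => rw [← e.symm_apply_apply x]
    rw [he, TensorProduct.equivFinsuppOfBasisRight_symm_apply]
  rw [hx']
  refine Submodule.sum_mem _ ?_
  rintro (t | t) ht
  · refine tmul_mem_tp ⟨h1 X x hxX _, h1 Y x hxY _⟩ ?_
    have : b (Sum.inl t) = (bD t : N) := by
      rw [hb, Module.Basis.map_apply, Module.Basis.prod_apply]
      simp [Submodule.coe_prodEquivOfIsCompl']
    rw [this]
    exact (bD t).2
  · exact absurd (h2 x hxX t) (Finsupp.mem_support_iff.1 ht)

theorem map_lTensor_tp_le (f : N →ₗ[k] N) (X : Submodule k M) (Y : Submodule k N) :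
    (tp X Y).map (LinearMap.lTensor M f) ≤ tp X (Y.map f) := by
  rw [Submodule.map_le_iff_le_comap]
  refine Submodule.map₂_le (f := TensorProduct.mk k M N)
    (r := (tp X (Y.map f)).comap (LinearMap.lTensor M f)) |>.2 ?_
  intro m hm n hn
  simp only [Submodule.mem_comap, TensorProduct.mk_apply, LinearMap.lTensor_tmul]
  exact tmul_mem_tp hm (Submodule.mem_map_of_mem hn)

theorem core_le (U U' : ℕ → Submodule k M) (V : ℕ → Submodule k N)
    (hU : ∀ i, U (i + 1) ≤ U i) (hU' : ∀ i, U' (i + 1) ≤ U' i)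
    (hV : ∀ j, V (j + 1) ≤ V j) (s : ℕ) :
    (∑ i ∈ Finset.range (s + 1), tp (U i) (V (s - i))) ⊓
      (∑ i ∈ Finset.range (s + 1), tp (U' i) (V (s - i))) ≤
    ∑ i ∈ Finset.range (s + 1), tp (U i ⊓ U' i) (V (s - i)) := by
  induction s generalizing U U' V with
  | zero => simpa using key_inf (U 0) (U' 0) (V 0)
  | succ s ih =>
    have hVmono : Antitone V := antitone_nat_of_succ_le hV
    -- build a projection P onto a complement D of V 1 inside V 0
    obtain ⟨E, hE⟩ := Submodule.exists_isCompl (V 0)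
    obtain ⟨D₀, hD₀⟩ := Submodule.exists_isCompl ((V 1).comap (V 0).subtype)
    set D : Submodule k N := D₀.map (V 0).subtype with hD
    have hDV0 : D ≤ V 0 := by
      rw [hD]; rintro x ⟨y, _, rfl⟩; exact y.2
    have hmapV1 : ((V 1).comap (V 0).subtype).map (V 0).subtype = V 1 := by
      rw [Submodule.map_comap_subtype, inf_eq_right.2 (hV 0)]
    have hDinf : D ⊓ V 1 = ⊥ := by
      rw [hD, ← hmapV1, ← Submodule.map_inf _ (Submodule.injective_subtype (V 0)),
        inf_comm, disjoint_iff.1 hD₀.disjoint, Submodule.map_bot]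
    have hDsup : D ⊔ V 1 = V 0 := by
      rw [hD, ← hmapV1, ← Submodule.map_sup, sup_comm, codisjoint_iff.1 hD₀.codisjoint, Submodule.map_top,
        Submodule.range_subtype]
    have hV0infE : ∀ X : Submodule k N, X ≤ V 0 → X ⊓ (V 1 ⊔ E) = X ⊓ V 1 := by
      intro X hX
      have h1 : X ⊓ (V 1 ⊔ E) = X ⊓ (V 0 ⊓ (V 1 ⊔ E)) := by
        rw [← inf_assoc, inf_eq_left.2 hX]
      have h2 : V 0 ⊓ (V 1 ⊔ E) = V 1 := by
        rw [inf_comm, sup_inf_assoc_of_le E (show V 1 ≤ V 0 from hV 0), hE.symm.disjoint.eq_bot, sup_bot_eq]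
      rw [h1, h2]
    have hDC : IsCompl D (V 1 ⊔ E) := by
      constructor
      · rw [disjoint_iff, hV0infE D hDV0, hDinf]
      · rw [codisjoint_iff, ← sup_assoc, hDsup, codisjoint_iff.1 hE.codisjoint]
    set C : Submodule k N := V 1 ⊔ E with hC
    set P : N →ₗ[k] N := D.subtype ∘ₗ Submodule.projectionOnto D C hDC with hP
    set Q : N →ₗ[k] N := LinearMap.id - P with hQ
    have hPmem : ∀ n, P n ∈ D := fun n => (Submodule.projectionOnto D C hDC n).2
    have hPC : ∀ n ∈ C, P n = 0 := by
      intro n hn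
      rw [hP]
      simp [Submodule.projectionOnto_apply_of_mem_right hDC hn]
    have hQV1 : ∀ n ∈ V 1, Q n = n := by
      intro n hn
      rw [hQ]
      simp [hPC n (le_sup_left (a := V 1) (b := E) hn)]
    have hQV0 : ∀ n ∈ V 0, Q n ∈ V 1 := by
      intro n hn
      have h1 : Q n ∈ V 0 := by
        rw [hQ]
        simpa using Submodule.sub_mem _ hn (hDV0 (hPmem n))
      have h2 : Q n ∈ C := by
        have hproj : Submodule.projectionOnto D C hDC (Q n) = 0 := by
          have hPP : Submodule.projectionOnto D C hDC (P n)
              = Submodule.projectionOnto D C hDC n := by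
            rw [hP]
            simp only [LinearMap.coe_comp, Function.comp_apply, Submodule.coe_subtype]
            exact Submodule.projectionOnto_apply_left hDC _
          rw [hQ]
          simp only [LinearMap.sub_apply, LinearMap.id_apply, map_sub, hPP, sub_self]
        have : Q n ∈ LinearMap.ker (Submodule.projectionOnto D C hDC) :=
          LinearMap.mem_ker.2 hproj
        rwa [Submodule.ker_projectionOnto hDC] at this
      have h3 : Q n ∈ V 0 ⊓ C := ⟨h1, h2⟩
      rwa [hC, hV0infE (V 0) le_rfl, inf_eq_right.2 (hV 0)] at h3
    -- decomposition of any element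
    have hPQ : ∀ z : M ⊗[k] N,
        z = LinearMap.lTensor M P z + LinearMap.lTensor M Q z := by
      intro z
      have hsum : P + Q = LinearMap.id := by rw [hQ]; abel
      have : LinearMap.lTensor M (P + Q) z = z := by
        rw [hsum, LinearMap.lTensor_id, LinearMap.id_apply]
      conv_lhs => rw [← this]
      rw [LinearMap.lTensor_add, LinearMap.add_apply]
    -- bound for the P-part
    have bound1 : ∀ W : ℕ → Submodule k M,
        (∑ i ∈ Finset.range (s + 1 + 1), tp (W i) (V (s + 1 - i))).map (LinearMap.lTensor M P)
          ≤ tp (W (s + 1)) (V 0) := by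
      intro W
      rw [map_sum_submodule _ _ _]
      refine sum_le_submodule ?_
      intro i hi
      refine le_trans (map_lTensor_tp_le P (W i) (V (s + 1 - i))) ?_
      rcases Nat.lt_succ_iff_lt_or_eq.1 (Finset.mem_range.1 hi) with his | his
      · -- i ≤ s, so V (s+1-i) ≤ V 1 ≤ C and P kills it
        have hle : V (s + 1 - i) ≤ V 1 := hVmono (by omega)
        have : (V (s + 1 - i)).map P ≤ ⊥ := by
          rintro x ⟨n, hn, rfl⟩
          simp [Submodule.mem_bot, hPC n (le_sup_left (a := V 1) (b := E) (hle hn))]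
        refine le_trans (tp_mono le_rfl this) ?_
        rw [tp_bot_right]
        exact bot_le
      · subst his
        have : (V (s + 1 - (s + 1))).map P ≤ V 0 := by
          rintro x ⟨n, hn, rfl⟩
          exact hDV0 (hPmem n)
        exact tp_mono le_rfl this
    -- bound for the Q-part
    have bound2 : ∀ W : ℕ → Submodule k M, (∀ i, W (i + 1) ≤ W i) →
        (∑ i ∈ Finset.range (s + 1 + 1), tp (W i) (V (s + 1 - i))).map (LinearMap.lTensor M Q)
          ≤ ∑ i ∈ Finset.range (s + 1), tp (W i) (V (s + 1 - i)) := by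
      intro W hW
      rw [map_sum_submodule _ _ _]
      refine sum_le_submodule ?_
      intro i hi
      refine le_trans (map_lTensor_tp_le Q (W i) (V (s + 1 - i))) ?_
      rcases Nat.lt_succ_iff_lt_or_eq.1 (Finset.mem_range.1 hi) with his | his
      · have hle : V (s + 1 - i) ≤ V 1 := hVmono (by omega)
        have hmap : (V (s + 1 - i)).map Q ≤ V (s + 1 - i) := by
          rintro x ⟨n, hn, rfl⟩
          rwa [hQV1 n (hle hn)]
        exact le_trans (tp_mono le_rfl hmap) (le_sum_submodule (p := fun j => tp (W j) (V (s + 1 - j))) (Finset.mem_range.2 his))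
      · subst his
        have hmap : (V (s + 1 - (s + 1))).map Q ≤ V 1 := by
          rintro x ⟨n, hn, rfl⟩
          exact hQV0 n (by simpa using hn)
        refine le_trans (tp_mono (hW s) ?_)
          (le_sum_submodule (p := fun j => tp (W j) (V (s + 1 - j))) (i := s) (by simp))
        have e0 : s + 1 - (s + 1) = 0 := by omega
        have e1 : s + 1 - s = 1 := by omega
        rw [e0] at hmap
        rw [e0, e1]
        exact hmap
    -- now the main argument
    rintro x ⟨hx1, hx2⟩
    rw [hPQ x]
    refine Submodule.add_mem _ ?_ ?_
    · -- P-part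
      have m1 : LinearMap.lTensor M P x ∈ tp (U (s + 1)) (V 0) :=
        bound1 U (Submodule.mem_map_of_mem hx1)
      have m2 : LinearMap.lTensor M P x ∈ tp (U' (s + 1)) (V 0) :=
        bound1 U' (Submodule.mem_map_of_mem hx2)
      have m3 : LinearMap.lTensor M P x ∈ tp (U (s + 1) ⊓ U' (s + 1)) (V 0) :=
        key_inf (U (s + 1)) (U' (s + 1)) (V 0) ⟨m1, m2⟩
      refine le_sum_submodule (i := s + 1) (Finset.self_mem_range_succ _) ?_
      simpa using m3
    · -- Q-part
      have hshift : ∀ i ∈ Finset.range (s + 1),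
          tp (U i ⊓ U' i) (V (s + 1 - i)) = tp (U i ⊓ U' i) ((fun j => V (j + 1)) (s - i)) := by
        intro i hi
        have : s + 1 - i = s - i + 1 := by
          have := Finset.mem_range.1 hi; omega
        rw [this]
      have hshift1 : ∀ (W : ℕ → Submodule k M), ∀ i ∈ Finset.range (s + 1),
          tp (W i) (V (s + 1 - i)) = tp (W i) ((fun j => V (j + 1)) (s - i)) := by
        intro W i hi
        have : s + 1 - i = s - i + 1 := by
          have := Finset.mem_range.1 hi; omega
        rw [this]
      have m1 : LinearMap.lTensor M Q x
          ∈ ∑ i ∈ Finset.range (s + 1), tp (U i) ((fun j => V (j + 1)) (s - i)) := by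
        rw [← Finset.sum_congr rfl (hshift1 U)]
        exact bound2 U hU (Submodule.mem_map_of_mem hx1)
      have m2 : LinearMap.lTensor M Q x
          ∈ ∑ i ∈ Finset.range (s + 1), tp (U' i) ((fun j => V (j + 1)) (s - i)) := by
        rw [← Finset.sum_congr rfl (hshift1 U')]
        exact bound2 U' hU' (Submodule.mem_map_of_mem hx2)
      have m3 := ih U U' (fun j => V (j + 1)) hU hU' (fun j => hV (j + 1)) ⟨m1, m2⟩
      rw [← Finset.sum_congr rfl hshift] at m3
      refine sum_le_submodule ?_ m3
      intro i hi
      exact le_sum_submodule (p := fun j => tp (U j ⊓ U' j) (V (s + 1 - j)))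
        (Finset.mem_range.2 (by have := Finset.mem_range.1 hi; omega))

end Key

section Bridge

variable {k A B : Type*} [Field k] [CommRing A] [CommRing B] [Algebra k A] [Algebra k B]

/-- `tp` of two ideals is an ideal of `A ⊗[k] B`. -/
noncomputable def tpI (I : Ideal A) (J : Ideal B) : Ideal (A ⊗[k] B) where
  carrier := tp (I.restrictScalars k) (J.restrictScalars k)
  add_mem' := fun h1 h2 => Submodule.add_mem _ h1 h2
  zero_mem' := Submodule.zero_mem _
  smul_mem' := by
    intro c x hx
    simp only [smul_eq_mul]
    induction c using TensorProduct.induction_on with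
    | zero => simpa using Submodule.zero_mem (tp (I.restrictScalars k) (J.restrictScalars k))
    | tmul a b =>
      refine Submodule.map₂_le (f := TensorProduct.mk k A B)
        (r := (tp (I.restrictScalars k) (J.restrictScalars k)).comap
          (LinearMap.mulLeft k (a ⊗ₜ[k] b))) |>.2 ?_ hx
      intro m hm n hn
      simp only [Submodule.mem_comap, TensorProduct.mk_apply, LinearMap.mulLeft_apply,
        Algebra.TensorProduct.tmul_mul_tmul]
      exact tmul_mem_tp
        ((Submodule.restrictScalars_mem _ _ _).2
          (Ideal.mul_mem_left _ a ((Submodule.restrictScalars_mem _ _ _).1 hm)))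
        ((Submodule.restrictScalars_mem _ _ _).2
          (Ideal.mul_mem_left _ b ((Submodule.restrictScalars_mem _ _ _).1 hn)))
    | add c d hc hd =>
      rw [add_mul]
      exact Submodule.add_mem _ hc hd

theorem restrictScalars_tpI (I : Ideal A) (J : Ideal B) :
    Submodule.restrictScalars k (tpI I J) = tp (I.restrictScalars k) (J.restrictScalars k) :=
  rfl

theorem mem_tpI_of_tmul {I : Ideal A} {J : Ideal B} {a : A} {b : B} (ha : a ∈ I) (hb : b ∈ J) :
    a ⊗ₜ[k] b ∈ tpI I J :=
  tmul_mem_tp ((Submodule.restrictScalars_mem _ _ _).2 ha)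
    ((Submodule.restrictScalars_mem _ _ _).2 hb)

theorem extL_mul_extR (I : Ideal A) (J : Ideal B) :
    extL k B I * extR k A J = tpI I J := by
  refine le_antisymm ?_ ?_
  · rw [extL, extR, Ideal.map, Ideal.map, Ideal.span_mul_span']
    refine Ideal.span_le.2 ?_
    rintro x hx
    rw [Set.mem_mul] at hx
    obtain ⟨u, hu, v, hv, rfl⟩ := hx
    obtain ⟨a, ha, rfl⟩ := hu
    obtain ⟨b, hb, rfl⟩ := hv
    have : (Algebra.TensorProduct.includeLeft (R := k) (S := k) a : A ⊗[k] B) *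
        Algebra.TensorProduct.includeRight b = a ⊗ₜ[k] b := by
      simp only [Algebra.TensorProduct.includeLeft_apply,
        Algebra.TensorProduct.includeRight_apply, Algebra.TensorProduct.tmul_mul_tmul,
        mul_one, one_mul]
    rw [this]
    exact mem_tpI_of_tmul ha hb
  · intro x hx
    refine Submodule.map₂_le (f := TensorProduct.mk k A B)
      (r := Submodule.restrictScalars k (extL k B I * extR k A J)) |>.2 ?_ hx
    intro a ha b hb
    have : (TensorProduct.mk k A B) a b = (a ⊗ₜ[k] (1 : B)) * ((1 : A) ⊗ₜ[k] b) := by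
      simp [Algebra.TensorProduct.tmul_mul_tmul]
    rw [Submodule.restrictScalars_mem, this]
    exact Ideal.mul_mem_mul (Ideal.mem_map_of_mem _ ha) (Ideal.mem_map_of_mem _ hb)

theorem restrictScalars_sup_ideal (p q : Ideal (A ⊗[k] B)) :
    Submodule.restrictScalars k (p ⊔ q) =
      Submodule.restrictScalars k p ⊔ Submodule.restrictScalars k q := by
  ext x
  rw [Submodule.restrictScalars_mem, Submodule.mem_sup, Submodule.mem_sup]
  simp only [Submodule.restrictScalars_mem]

theorem restrictScalars_sum_ideal {ι : Type*} (t : Finset ι) (p : ι → Ideal (A ⊗[k] B)) :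
    Submodule.restrictScalars k (∑ i ∈ t, p i) =
      ∑ i ∈ t, Submodule.restrictScalars k (p i) := by
  classical
  induction t using Finset.induction_on with
  | empty => simp [Submodule.restrictScalars_bot]
  | insert _ _ hx ih =>
    rename_i a t'
    rw [Finset.sum_insert hx, Finset.sum_insert hx, Submodule.add_eq_sup,
      Submodule.add_eq_sup, restrictScalars_sup_ideal, ih]

end Bridge

end InfBinomAux

/-- For descending filtrations `{Iᵢ}, {Kᵢ}` of ideals of `A` with `I₀ = K₀ = A` and a
descending filtration `{Jⱼ}` of ideals of `B` with `J₀ = B`, in `R = A ⊗[k] B` one has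
`(Σ_{i=0}^s Iᵢ J_{s-i}) ∩ (Σ_{i=0}^s Kᵢ J_{s-i}) = Σ_{i=0}^s (Iᵢ ∩ Kᵢ) J_{s-i}`. -/
theorem inf_binom_sums {k A B : Type*} [Field k] [CommRing A] [CommRing B]
    [Algebra k A] [Algebra k B] [IsNoetherianRing A] [IsNoetherianRing B]
    [IsNoetherianRing (A ⊗[k] B)]
    (I K : ℕ → Ideal A) (J : ℕ → Ideal B)
    (hI : ∀ i, I (i + 1) ≤ I i) (hK : ∀ i, K (i + 1) ≤ K i) (hJ : ∀ j, J (j + 1) ≤ J j)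
    (hI0 : I 0 = ⊤) (hK0 : K 0 = ⊤) (hJ0 : J 0 = ⊤)
    (s : ℕ) (hs : 1 ≤ s) :
    (∑ i ∈ Finset.range (s + 1), extL k B (I i) * extR k A (J (s - i))) ⊓
        (∑ i ∈ Finset.range (s + 1), extL k B (K i) * extR k A (J (s - i))) =
      ∑ i ∈ Finset.range (s + 1), extL k B (I i ⊓ K i) * extR k A (J (s - i)) := by
  classical
  refine le_antisymm ?_ ?_
  · -- the hard direction, via linear algebra over `k`
    have key := InfBinomAux.core_le (k := k)
      (fun i => (I i).restrictScalars k) (fun i => (K i).restrictScalars k)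
      (fun j => (J j).restrictScalars k)
      (fun i x hx => hI i hx) (fun i x hx => hK i hx) (fun j x hx => hJ j hx) s
    have eqI : Submodule.restrictScalars k
        (∑ i ∈ Finset.range (s + 1), extL k B (I i) * extR k A (J (s - i))) =
        ∑ i ∈ Finset.range (s + 1),
          InfBinomAux.tp ((I i).restrictScalars k) ((J (s - i)).restrictScalars k) := by
      rw [InfBinomAux.restrictScalars_sum_ideal]
      exact Finset.sum_congr rfl fun i _ => by
        rw [InfBinomAux.extL_mul_extR, InfBinomAux.restrictScalars_tpI]
    have eqK : Submodule.restrictScalars k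
        (∑ i ∈ Finset.range (s + 1), extL k B (K i) * extR k A (J (s - i))) =
        ∑ i ∈ Finset.range (s + 1),
          InfBinomAux.tp ((K i).restrictScalars k) ((J (s - i)).restrictScalars k) := by
      rw [InfBinomAux.restrictScalars_sum_ideal]
      exact Finset.sum_congr rfl fun i _ => by
        rw [InfBinomAux.extL_mul_extR, InfBinomAux.restrictScalars_tpI]
    have eqInf : ∀ i, (I i ⊓ K i).restrictScalars k =
        (I i).restrictScalars k ⊓ (K i).restrictScalars k := fun i => rfl
    have eqIK : Submodule.restrictScalars k
        (∑ i ∈ Finset.range (s + 1), extL k B (I i ⊓ K i) * extR k A (J (s - i))) =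
        ∑ i ∈ Finset.range (s + 1),
          InfBinomAux.tp ((I i).restrictScalars k ⊓ (K i).restrictScalars k)
            ((J (s - i)).restrictScalars k) := by
      rw [InfBinomAux.restrictScalars_sum_ideal]
      exact Finset.sum_congr rfl fun i _ => by
        rw [InfBinomAux.extL_mul_extR, InfBinomAux.restrictScalars_tpI, eqInf i]
    intro x hx
    have hx1 : x ∈ ∑ i ∈ Finset.range (s + 1),
        InfBinomAux.tp ((I i).restrictScalars k) ((J (s - i)).restrictScalars k) := by
      rw [← eqI]; exact hx.1
    have hx2 : x ∈ ∑ i ∈ Finset.range (s + 1),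
        InfBinomAux.tp ((K i).restrictScalars k) ((J (s - i)).restrictScalars k) := by
      rw [← eqK]; exact hx.2
    have hmem := key ⟨hx1, hx2⟩
    have : x ∈ Submodule.restrictScalars k
        (∑ i ∈ Finset.range (s + 1), extL k B (I i ⊓ K i) * extR k A (J (s - i))) := by
      rw [eqIK]; exact hmem
    exact this
  · -- the easy direction
    refine le_inf ?_ ?_
    · refine InfBinomAux.ideal_sum_le fun i hi => ?_
      exact le_trans (Ideal.mul_mono (Ideal.map_mono inf_le_left) le_rfl)
        (InfBinomAux.ideal_le_sum (p := fun i => extL k B (I i) * extR k A (J (s - i))) hi)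
    · refine InfBinomAux.ideal_sum_le fun i hi => ?_
      exact le_trans (Ideal.mul_mono (Ideal.map_mono inf_le_right) le_rfl)
        (InfBinomAux.ideal_le_sum (p := fun i => extL k B (K i) * extR k A (J (s - i))) hi)
end

section
/- Let k be a field, A and B Noetherian k-algebras with R = A ⊗_k B Noetherian. Let {I_i}_{i≥0} be a descending filtration of ideals of A with I_0 = A, {J_j}_{j≥0} a descending filtration of ideals of B with J_0 = B, and a ∈ A an element. Then for any 0 ≤ t ≤ s-1: (Σ_{i=t}^s I_i J_{s-i}) :_R a ⊆ (I_t :_A a) J_{s-t} + (Σ_{i=t+1}^s I_i J_{s-i}) :_R a. -/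
open TensorProduct Ideal

section Aux

variable {k A B : Type*} [Field k] [CommRing A] [CommRing B] [Algebra k A] [Algebra k B]

/-- The `A`-submodule of `A ⊗[k] B` spanned by elementary tensors `c ⊗ v`
with `c ∈ I` and `v ∈ V`. -/
noncomputable def SM (I : Ideal A) (V : Submodule k B) : Submodule A (A ⊗[k] B) :=
  Submodule.span A {x | ∃ c ∈ I, ∃ v ∈ V, x = c ⊗ₜ[k] v}

lemma tmul_mem_SM {I : Ideal A} {V : Submodule k B} {c : A} {v : B}
    (hc : c ∈ I) (hv : v ∈ V) : c ⊗ₜ[k] v ∈ SM I V :=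
  Submodule.subset_span ⟨c, hc, v, hv, rfl⟩

lemma SM_le_mul (I : Ideal A) (J : Ideal B) :
    SM (k := k) I (J.restrictScalars k) ≤ (extL k B I * extR k A J).restrictScalars A := by
  rw [SM, Submodule.span_le]
  rintro x ⟨c, hc, v, hv, rfl⟩
  have h : c ⊗ₜ[k] v = (c ⊗ₜ[k] (1 : B)) * ((1 : A) ⊗ₜ[k] v) := by
    rw [Algebra.TensorProduct.tmul_mul_tmul, mul_one, one_mul]
  rw [SetLike.mem_coe, Submodule.restrictScalars_mem, h]
  exact Ideal.mul_mem_mul (Ideal.mem_map_of_mem _ hc) (Ideal.mem_map_of_mem _ hv)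

lemma mul_mem_SM (I : Ideal A) (J : Ideal B) (r : A ⊗[k] B) {x : A ⊗[k] B}
    (hx : x ∈ SM I (J.restrictScalars k)) : r * x ∈ SM I (J.restrictScalars k) := by
  induction r using TensorProduct.induction_on with
  | zero => rw [zero_mul]; exact zero_mem _
  | tmul a' b' =>
    induction hx using Submodule.span_induction with
    | mem y hy =>
      obtain ⟨c, hc, v, hv, rfl⟩ := hy
      rw [Algebra.TensorProduct.tmul_mul_tmul]
      exact tmul_mem_SM (I.mul_mem_left a' hc) (J.mul_mem_left b' hv)
    | zero => rw [mul_zero]; exact zero_mem _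
    | add y z _ _ hy hz => rw [mul_add]; exact add_mem hy hz
    | smul a'' y _ hy => rw [mul_smul_comm]; exact Submodule.smul_mem _ _ hy
  | add r1 r2 h1 h2 => rw [add_mul]; exact add_mem h1 h2

lemma mul_le_SM (I : Ideal A) (J : Ideal B) :
    (extL k B I * extR k A J).restrictScalars A ≤ SM I (J.restrictScalars k) := by
  intro x hx
  rw [Submodule.restrictScalars_mem] at hx
  have hspan : extL k B I * extR k A J
      = Ideal.span {x : A ⊗[k] B | ∃ c ∈ I, ∃ v ∈ J, x = c ⊗ₜ[k] v} := by
    have h1 : extL k B I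
        = Ideal.span ((Algebra.TensorProduct.includeLeft : A →ₐ[k] A ⊗[k] B) '' I) := rfl
    have h2 : extR k A J
        = Ideal.span ((Algebra.TensorProduct.includeRight : B →ₐ[k] A ⊗[k] B) '' J) := rfl
    rw [h1, h2, Ideal.span_mul_span']
    congr 1
    ext z
    constructor
    · rintro ⟨y1, ⟨c, hc, rfl⟩, y2, ⟨v, hv, rfl⟩, rfl⟩
      refine ⟨c, hc, v, hv, ?_⟩
      simp [Algebra.TensorProduct.tmul_mul_tmul]
    · rintro ⟨c, hc, v, hv, rfl⟩
      refine ⟨_, ⟨c, hc, rfl⟩, _, ⟨v, hv, rfl⟩, ?_⟩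
      simp [Algebra.TensorProduct.tmul_mul_tmul]
  rw [hspan] at hx
  induction hx using Submodule.span_induction with
  | mem y hy => obtain ⟨c, hc, v, hv, rfl⟩ := hy; exact tmul_mem_SM hc hv
  | zero => exact zero_mem _
  | add y z _ _ hy hz => exact add_mem hy hz
  | smul r y _ hy => rw [smul_eq_mul]; exact mul_mem_SM I J r hy

lemma baseChange_mem_SM_top (p : B →ₗ[k] B) (V : Submodule k B) (hp : ∀ b, p b ∈ V)
    (z : A ⊗[k] B) : LinearMap.baseChange A p z ∈ SM ⊤ V := by
  induction z using TensorProduct.induction_on with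
  | zero => rw [map_zero]; exact zero_mem _
  | tmul c v => rw [LinearMap.baseChange_tmul]; exact tmul_mem_SM Submodule.mem_top (hp v)
  | add y z hy hz => rw [map_add]; exact add_mem hy hz

lemma SM_colon (Ia : Ideal A) (V : Submodule k B) (a : A) (x : A ⊗[k] B)
    (hx : x ∈ SM ⊤ V) (hax : a • x ∈ SM Ia V) :
    x ∈ SM (Ia.colon (Ideal.span {a})) V := by
  obtain ⟨W, hW⟩ := Submodule.exists_isCompl V
  set bV := Module.Basis.ofVectorSpace k V with hbV
  set bW := Module.Basis.ofVectorSpace k W with hbW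
  set bB := (bV.prod bW).map (Submodule.prodEquivOfIsCompl V W hW) with hbB
  set bR := Algebra.TensorProduct.basis A bB with hbR
  have hbBV : ∀ i, bB (Sum.inl i) ∈ V := by
    intro i
    rw [hbB, Module.Basis.map_apply]
    have : (bV.prod bW) (Sum.inl i) = (bV i, 0) := by
      ext
      · rw [Module.Basis.prod_apply_inl_fst]
      · rw [Module.Basis.prod_apply_inl_snd]
    rw [this, Submodule.coe_prodEquivOfIsCompl']
    simpa using (bV i).2
  have hcoord : ∀ (I' : Ideal A) (z : A ⊗[k] B), z ∈ SM I' V ↔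
      (∀ i, bR.repr z (Sum.inl i) ∈ I') ∧ ∀ j, bR.repr z (Sum.inr j) = 0 := by
    intro I' z
    constructor
    · intro hz
      induction hz using Submodule.span_induction with
      | mem y hy =>
        obtain ⟨c, hc, v, hv, rfl⟩ := hy
        have hrepr : ∀ l, bR.repr (c ⊗ₜ[k] v) l = c * algebraMap k A (bB.repr v l) := by
          intro l
          rw [hbR, Algebra.TensorProduct.basis_repr_tmul]
          simp [smul_eq_mul]
        have hvV : (Submodule.prodEquivOfIsCompl V W hW).symm v = ((⟨v, hv⟩ : V), 0) :=
          Submodule.prodEquivOfIsCompl_symm_apply_left V W hW (⟨v, hv⟩ : V)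
        have hvrepr : ∀ l, bB.repr v l = (bV.prod bW).repr (⟨v, hv⟩, 0) l := by
          intro l
          rw [hbB, Module.Basis.map_repr]
          simp [hvV]
        constructor
        · intro i
          rw [hrepr]
          exact Ideal.mul_mem_right _ _ hc
        · intro j
          rw [hrepr, hvrepr, Module.Basis.prod_repr_inr]
          simp
      | zero => simp
      | add y z _ _ hy hz =>
        refine ⟨fun i => ?_, fun j => ?_⟩
        · rw [map_add, Finsupp.add_apply]; exact add_mem (hy.1 i) (hz.1 i)
        · rw [map_add, Finsupp.add_apply, hy.2 j, hz.2 j, add_zero]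
      | smul r y _ hy =>
        refine ⟨fun i => ?_, fun j => ?_⟩
        · rw [map_smul, Finsupp.smul_apply, smul_eq_mul]
          exact Ideal.mul_mem_left _ _ (hy.1 i)
        · rw [map_smul, Finsupp.smul_apply, hy.2 j, smul_zero]
    · rintro ⟨h1, h2⟩
      have hz := bR.linearCombination_repr z
      rw [Finsupp.linearCombination_apply, Finsupp.sum] at hz
      rw [← hz]
      refine Submodule.sum_mem _ ?_
      intro l _
      rcases l with i | j
      · have hb : bR (Sum.inl i) = (1 : A) ⊗ₜ[k] bB (Sum.inl i) := by
          rw [hbR]; exact Algebra.TensorProduct.basis_apply _ _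
        rw [hb, TensorProduct.smul_tmul', smul_eq_mul, mul_one]
        exact tmul_mem_SM (h1 i) (hbBV i)
      · rw [h2 j, zero_smul]
        exact zero_mem _
  obtain ⟨hx1, hx2⟩ := (hcoord ⊤ x).mp hx
  obtain ⟨hax1, _⟩ := (hcoord Ia (a • x)).mp hax
  refine (hcoord _ x).mpr ⟨fun i => ?_, hx2⟩
  rw [Ideal.mem_colon_span_singleton, mul_comm]
  have := hax1 i
  rwa [map_smul, Finsupp.smul_apply, smul_eq_mul] at this

lemma sum_restrictScalars_le {ι : Type*} (F : Finset ι) (T : ι → Ideal (A ⊗[k] B))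
    (K : Submodule A (A ⊗[k] B)) (h : ∀ i ∈ F, (T i).restrictScalars A ≤ K) :
    (∑ i ∈ F, T i).restrictScalars A ≤ K := by
  classical
  induction F using Finset.induction_on with
  | empty =>
    intro x hx
    rw [Finset.sum_empty, Submodule.restrictScalars_mem] at hx
    simpa using (Ideal.mem_bot.mp hx ▸ K.zero_mem)
  | insert j F' hnotin ih =>
    intro x hx
    rw [Finset.sum_insert hnotin, Submodule.restrictScalars_mem, Submodule.add_eq_sup] at hx
    obtain ⟨y, hy, z, hz, rfl⟩ := Submodule.mem_sup.mp hx
    exact K.add_mem (h j (Finset.mem_insert_self _ _) hy)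
      (ih (fun i hi => h i (Finset.mem_insert_of_mem hi)) hz)

lemma ideal_le_sum {ι : Type*} {R : Type*} [CommRing R] (F : Finset ι) (T : ι → Ideal R)
    {i : ι} (hi : i ∈ F) : T i ≤ ∑ j ∈ F, T j :=
  Finset.single_le_sum (f := T) (fun _ _ => zero_le) hi

end Aux

/-- For descending filtrations with `I₀ = A`, `J₀ = B`, an element `a ∈ A`, and
`0 ≤ t ≤ s-1`:
`(Σ_{i=t}^s Iᵢ J_{s-i}) :_R a ⊆ (I_t :_A a) J_{s-t} + (Σ_{i=t+1}^s Iᵢ J_{s-i}) :_R a`. -/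
theorem colon_elt_binom_sum {k A B : Type*} [Field k] [CommRing A] [CommRing B]
    [Algebra k A] [Algebra k B] [IsNoetherianRing A] [IsNoetherianRing B]
    [IsNoetherianRing (A ⊗[k] B)]
    (I : ℕ → Ideal A) (J : ℕ → Ideal B)
    (hI : ∀ i, I (i + 1) ≤ I i) (hJ : ∀ j, J (j + 1) ≤ J j)
    (hI0 : I 0 = ⊤) (hJ0 : J 0 = ⊤)
    (a : A) (s t : ℕ) (ht : t < s) :
    (∑ i ∈ Finset.Icc t s, extL k B (I i) * extR k A (J (s - i))).colon
        (Ideal.span {a ⊗ₜ[k] (1 : B)}) ≤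
      extL k B ((I t).colon (Ideal.span {a})) * extR k A (J (s - t)) +
        (∑ i ∈ Finset.Icc (t + 1) s, extL k B (I i) * extR k A (J (s - i))).colon
          (Ideal.span {a ⊗ₜ[k] (1 : B)}) := by
  classical
  have hIant : ∀ {i j : ℕ}, i ≤ j → I j ≤ I i := fun h => antitone_nat_of_succ_le hI h
  have hJant : ∀ {i j : ℕ}, i ≤ j → J j ≤ J i := fun h => antitone_nat_of_succ_le hJ h
  set V : Submodule k B := (J (s - t)).restrictScalars k with hV
  obtain ⟨W, hW⟩ := Submodule.exists_isCompl V
  set π : B →ₗ[k] B := V.subtype.comp (V.linearProjOfIsCompl W hW) with hπ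
  have hπV : ∀ b, π b ∈ V := fun b => (V.linearProjOfIsCompl W hW b).2
  have hπid : ∀ v ∈ V, π v = v := by
    intro v hv
    have : V.linearProjOfIsCompl W hW v = ⟨v, hv⟩ :=
      Submodule.linearProjOfIsCompl_apply_left hW ⟨v, hv⟩
    rw [hπ, LinearMap.comp_apply, this]
    rfl
  set f : A ⊗[k] B →ₗ[A] A ⊗[k] B := LinearMap.baseChange A π with hf
  intro x hx
  rw [Ideal.mem_colon_span_singleton] at hx
  have hmul : ∀ z : A ⊗[k] B, a • z = z * (a ⊗ₜ[k] (1 : B)) := by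
    intro z
    rw [Algebra.smul_def, mul_comm]
    rfl
  have hxN : a • x ∈ ∑ i ∈ Finset.Icc t s, extL k B (I i) * extR k A (J (s - i)) := by
    rw [hmul]; exact hx
  set N' : Ideal (A ⊗[k] B) := ∑ i ∈ Finset.Icc (t + 1) s, extL k B (I i) * extR k A (J (s - i))
    with hN'
  set K : Submodule A (A ⊗[k] B) :=
    (SM (I t) V).comap f ⊓ (N'.restrictScalars A).comap (LinearMap.id - f) with hK
  have hkey : (∑ i ∈ Finset.Icc t s,
      extL k B (I i) * extR k A (J (s - i))).restrictScalars A ≤ K := by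
    apply sum_restrictScalars_le
    intro i hi
    rw [Finset.mem_Icc] at hi
    refine le_trans (mul_le_SM _ _) ?_
    rw [SM, Submodule.span_le]
    rintro y ⟨c, hc, v, hv, rfl⟩
    rw [Submodule.restrictScalars_mem] at hv
    refine Submodule.mem_inf.mpr ⟨?_, ?_⟩
    · rw [Submodule.mem_comap, hf, LinearMap.baseChange_tmul]
      exact tmul_mem_SM (hIant hi.1 hc) (hπV v)
    · rw [Submodule.mem_comap, LinearMap.sub_apply, LinearMap.id_apply, hf,
        LinearMap.baseChange_tmul, ← TensorProduct.tmul_sub]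
      rcases eq_or_lt_of_le hi.1 with rfl | hti
      · have hvV : v ∈ V := by rw [hV, Submodule.restrictScalars_mem]; exact hv
        rw [hπid v hvV, sub_self, TensorProduct.tmul_zero]
        exact zero_mem _
      · have hπvJ : π v ∈ J (s - i) := by
          have h1 : π v ∈ J (s - t) := hπV v
          exact hJant (Nat.sub_le_sub_left hi.1 s) h1
        have hsub : v - π v ∈ J (s - i) := sub_mem hv hπvJ
        have hmem : c ⊗ₜ[k] (v - π v)
            ∈ (extL k B (I i) * extR k A (J (s - i))).restrictScalars A :=
          SM_le_mul _ _ (tmul_mem_SM hc hsub)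
        rw [Submodule.restrictScalars_mem] at hmem ⊢
        exact ideal_le_sum _ _ (Finset.mem_Icc.mpr ⟨hti, hi.2⟩) hmem
  have hxK : a • x ∈ K := hkey (by rw [Submodule.restrictScalars_mem]; exact hxN)
  obtain ⟨h1, h2⟩ := Submodule.mem_inf.mp hxK
  rw [Submodule.mem_comap, map_smul] at h1
  have hfx : f x ∈ SM ((I t).colon (Ideal.span {a})) V :=
    SM_colon _ _ _ _ (baseChange_mem_SM_top π V hπV x) h1
  have hfxP : f x ∈ extL k B ((I t).colon (Ideal.span {a})) * extR k A (J (s - t)) := by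
    have := SM_le_mul (k := k) ((I t).colon (Ideal.span {a})) (J (s - t)) hfx
    rwa [Submodule.restrictScalars_mem] at this
  have h2' : x - f x ∈ N'.colon (Ideal.span {a ⊗ₜ[k] (1 : B)}) := by
    rw [Ideal.mem_colon_span_singleton, ← hmul, smul_sub]
    rw [Submodule.mem_comap, LinearMap.sub_apply, LinearMap.id_apply, map_smul,
      Submodule.restrictScalars_mem] at h2
    exact h2
  have hxsum : x = f x + (x - f x) := by ring
  rw [hxsum, Submodule.add_eq_sup]
  exact Submodule.add_mem_sup hfxP h2'
end

section
/- Let k be a field, A and B Noetherian k-algebras with R = A ⊗_k B Noetherian. Let {I_i}_{i≥0} be a descending filtration of ideals of A with I_0 = A, {J_j}_{j≥0} a descending filtration of ideals of B with J_0 = B, and K ⊆ A an ideal. Then for all s ≥ 0: (Σ_{i=0}^s I_i J_{s-i}) :_R K = Σ_{i=0}^s (I_i :_A K) J_{s-i}. -/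
open TensorProduct Ideal

section QColon

variable {A : Type*} [CommRing A] {M : Type*} [AddCommGroup M] [Module A M]

/-- `{x | ∀ c ∈ K, c • x ∈ N}`. -/
def qcolon (N : Submodule A M) (K : Ideal A) : Submodule A M where
  carrier := {x | ∀ c ∈ K, c • x ∈ N}
  add_mem' hx hy c hc := by rw [smul_add]; exact N.add_mem (hx c hc) (hy c hc)
  zero_mem' c hc := by simpa using N.zero_mem
  smul_mem' a x hx c hc := by rw [smul_comm]; exact N.smul_mem a (hx c hc)

lemma mem_qcolon {N : Submodule A M} {K : Ideal A} {x : M} :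
    x ∈ qcolon N K ↔ ∀ c ∈ K, c • x ∈ N := Iff.rfl

lemma qcolon_top (K : Ideal A) : qcolon (⊤ : Submodule A M) K = ⊤ := by
  ext x; simp [mem_qcolon]

/-- helper: a single summand is contained in a finset-sum of submodules -/
lemma le_sum_submodule {ι : Type*} (t : Finset ι) (G : ι → Submodule A M) {i : ι} (hi : i ∈ t) :
    G i ≤ ∑ j ∈ t, G j := by
  classical
  induction t using Finset.induction_on with
  | empty => simp at hi
  | insert _ _ hni ih =>
    rw [Finset.sum_insert hni, Submodule.add_eq_sup]
    rcases Finset.mem_insert.mp hi with h | h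
    · exact h ▸ le_sup_left
    · exact le_trans (ih h) le_sup_right

lemma sum_submodule_le {ι : Type*} {t : Finset ι} {G : ι → Submodule A M} {X : Submodule A M}
    (h : ∀ i ∈ t, G i ≤ X) : (∑ j ∈ t, G j) ≤ X := by
  classical
  induction t using Finset.induction_on with
  | empty => simp
  | insert _ _ hni ih =>
    rw [Finset.sum_insert hni, Submodule.add_eq_sup]
    exact sup_le (h _ (Finset.mem_insert_self _ _))
      (ih fun i hi => h i (Finset.mem_insert_of_mem hi))

lemma basis_mem_ideal_smul_top_iff {ι : Type*} (b : Module.Basis ι A M) (I : Ideal A) (x : M) :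
    x ∈ I • (⊤ : Submodule A M) ↔ ∀ i, b.repr x i ∈ I := by
  constructor
  · intro hx
    refine Submodule.smul_induction_on hx ?_ ?_
    · intro a ha m _ i
      rw [map_smul]
      exact I.mul_mem_right _ ha
    · intro x y hx hy i
      rw [map_add]
      exact I.add_mem (hx i) (hy i)
  · intro h
    rw [← b.linearCombination_repr x, Finsupp.linearCombination_apply, Finsupp.sum]
    exact Submodule.sum_mem _ fun i _ =>
      Submodule.smul_mem_smul (h i) Submodule.mem_top

lemma qcolon_ideal_smul_top {ι : Type*} (b : Module.Basis ι A M) (I K : Ideal A) :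
    qcolon (I • (⊤ : Submodule A M)) K = I.colon K • (⊤ : Submodule A M) := by
  ext x
  simp only [mem_qcolon, basis_mem_ideal_smul_top_iff b]
  constructor
  · intro h i
    rw [Submodule.mem_colon]
    intro c hc
    have := h c hc i
    rw [map_smul, Finsupp.smul_apply, smul_eq_mul] at this
    rwa [smul_eq_mul, mul_comm]
  · intro h c hc i
    rw [map_smul, Finsupp.smul_apply, smul_eq_mul]
    have := h i
    rw [Submodule.mem_colon] at this
    have := this c hc
    rwa [smul_eq_mul, mul_comm] at this

lemma colon_mono_left {I I' K : Ideal A} (h : I ≤ I') : I.colon K ≤ I'.colon K := by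
  intro a ha
  rw [Submodule.mem_colon] at ha ⊢
  exact fun c hc => h (ha c hc)

lemma top_colon (K : Ideal A) : (⊤ : Ideal A).colon K = ⊤ := by
  rw [eq_top_iff]
  intro a _
  rw [Submodule.mem_colon]
  exact fun _ _ => trivial

end QColon
section BaseChange

variable {k : Type*} [Field k] {A : Type*} [CommRing A] [Algebra k A]
  {M M' : Type*} [AddCommGroup M] [Module k M] [AddCommGroup M'] [Module k M']

lemma baseChange_mono {W W' : Submodule k M} (h : W ≤ W') :
    W.baseChange A ≤ W'.baseChange A := by
  rw [Submodule.baseChange_eq_span, Submodule.baseChange_eq_span]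
  exact Submodule.span_mono (Set.image_mono h)

lemma map_baseChange (f : M →ₗ[k] M') (W : Submodule k M) :
    (W.baseChange A).map (f.baseChange A) = (W.map f).baseChange A := by
  rw [Submodule.baseChange_eq_span, Submodule.baseChange_eq_span, Submodule.map_span]
  congr 1
  ext x
  simp only [Submodule.map_coe, Set.mem_image, SetLike.mem_coe]
  constructor
  · rintro ⟨y, ⟨w, hw, rfl⟩, rfl⟩
    exact ⟨f w, ⟨w, hw, rfl⟩, by simp [TensorProduct.mk_apply]⟩
  · rintro ⟨y, ⟨w, hw, rfl⟩, rfl⟩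
    exact ⟨(1 : A) ⊗ₜ[k] w, ⟨w, hw, rfl⟩, by simp [TensorProduct.mk_apply]⟩

lemma baseChange_fix {f : M →ₗ[k] M} {W : Submodule k M} (hf : ∀ w ∈ W, f w = w) :
    ∀ x ∈ W.baseChange A, f.baseChange A x = x := by
  intro x hx
  rw [Submodule.baseChange_eq_span] at hx
  induction hx using Submodule.span_induction with
  | mem y hy =>
    obtain ⟨w, hw, rfl⟩ := hy
    simp [TensorProduct.mk_apply, hf w hw]
  | zero => simp
  | add u v _ _ hu hv => rw [map_add, hu, hv]
  | smul a u _ hu => rw [map_smul, hu]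

lemma range_baseChange_le (f : M →ₗ[k] M') (W : Submodule k M') (hf : LinearMap.range f ≤ W) :
    LinearMap.range (f.baseChange A) ≤ W.baseChange A := by
  rw [LinearMap.range_eq_map, ← Submodule.baseChange_top, map_baseChange,
    ← LinearMap.range_eq_map]
  exact baseChange_mono hf

end BaseChange
universe u

section MapSum

variable {A : Type*} [CommRing A] {M M' : Type*} [AddCommGroup M] [Module A M]
  [AddCommGroup M'] [Module A M']

lemma map_sum_submodule (f : M →ₗ[A] M') {ι : Type*} (t : Finset ι) (G : ι → Submodule A M) :
    Submodule.map f (∑ i ∈ t, G i) = ∑ i ∈ t, (G i).map f := by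
  classical
  induction t using Finset.induction_on with
  | empty => simp [Submodule.zero_eq_bot]
  | insert _ _ hni ih =>
    rw [Finset.sum_insert hni, Finset.sum_insert hni, Submodule.add_eq_sup,
      Submodule.add_eq_sup, Submodule.map_sup, ih]

end MapSum

section Step

variable {k : Type*} [Field k] {A : Type*} [CommRing A] [Algebra k A]
  {M : Type u} [AddCommGroup M] [Module k M]

lemma step_map_sum (s : ℕ) (J : ℕ → Submodule k M) (hJanti : Antitone J)
    (Ifun : ℕ → Ideal A) :
    Submodule.map (((J 1).subtype).baseChange A)
        (∑ i ∈ Finset.range (s + 1),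
          Ifun i • (((J (s - i + 1)).comap (J 1).subtype).baseChange A)) =
      ∑ i ∈ Finset.range (s + 1), Ifun i • (J (s + 1 - i)).baseChange A := by
  rw [map_sum_submodule]
  refine Finset.sum_congr rfl fun i hi => ?_
  rw [Finset.mem_range] at hi
  rw [Submodule.map_smul'', map_baseChange, Submodule.map_comap_subtype,
    inf_of_le_right (hJanti (by omega : (1 : ℕ) ≤ s - i + 1))]
  have : s - i + 1 = s + 1 - i := by omega
  rw [this]

lemma step_split (s : ℕ) (J : ℕ → Submodule k M) (hJanti : Antitone J) (hJ0 : J 0 = ⊤)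
    {p : M →ₗ[k] M} (hp_fix : ∀ v ∈ J 1, p v = v) (hp_range : LinearMap.range p ≤ J 1)
    (Ifun : ℕ → Ideal A) (hIf : ∀ i, Ifun (i + 1) ≤ Ifun i) (x : A ⊗[k] M) :
    x ∈ ∑ i ∈ Finset.range (s + 1 + 1), Ifun i • (J (s + 1 - i)).baseChange A ↔
      p.baseChange A x ∈ ∑ i ∈ Finset.range (s + 1), Ifun i • (J (s + 1 - i)).baseChange A ∧
        x - p.baseChange A x ∈ Ifun (s + 1) • (⊤ : Submodule A (A ⊗[k] M)) := by
  set Φ := p.baseChange A with hΦ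
  set N₁ := ∑ i ∈ Finset.range (s + 1), Ifun i • (J (s + 1 - i)).baseChange A with hN₁
  have hsum : (∑ i ∈ Finset.range (s + 1 + 1), Ifun i • (J (s + 1 - i)).baseChange A) =
      N₁ ⊔ Ifun (s + 1) • (⊤ : Submodule A (A ⊗[k] M)) := by
    rw [Finset.sum_range_succ, Submodule.add_eq_sup]
    congr 2
    have : s + 1 - (s + 1) = 0 := by omega
    rw [this, hJ0, Submodule.baseChange_top]
  have hN₁le : N₁ ≤ (J 1).baseChange A :=
    sum_submodule_le fun i hi => by
      rw [Finset.mem_range] at hi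
      exact le_trans Submodule.smul_le_right
        (baseChange_mono (hJanti (by omega : (1 : ℕ) ≤ s + 1 - i)))
  have hΦfixN₁ : ∀ y ∈ N₁, Φ y = y := fun y hy => baseChange_fix hp_fix y (hN₁le hy)
  have hΦtopN₁ : ∀ t ∈ Ifun (s + 1) • (⊤ : Submodule A (A ⊗[k] M)), Φ t ∈ N₁ := by
    intro t ht
    have h1 : Φ t ∈ Submodule.map Φ (Ifun (s + 1) • ⊤) := Submodule.mem_map_of_mem ht
    rw [Submodule.map_smul''] at h1
    have h2 : Submodule.map Φ ⊤ ≤ (J 1).baseChange A := by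
      rw [← LinearMap.range_eq_map]
      exact range_baseChange_le p (J 1) hp_range
    have h3 : Φ t ∈ Ifun s • (J (s + 1 - s)).baseChange A := by
      have : s + 1 - s = 1 := by omega
      rw [this]
      exact Submodule.smul_mono (hIf s) h2 h1
    exact le_sum_submodule _ _ (Finset.self_mem_range_succ s) h3
  have hΦT : ∀ t ∈ Ifun (s + 1) • (⊤ : Submodule A (A ⊗[k] M)),
      Φ t ∈ Ifun (s + 1) • (⊤ : Submodule A (A ⊗[k] M)) := by
    intro t ht
    have h1 : Φ t ∈ Submodule.map Φ (Ifun (s + 1) • ⊤) := Submodule.mem_map_of_mem ht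
    rw [Submodule.map_smul''] at h1
    exact Submodule.smul_mono le_rfl le_top h1
  rw [hsum]
  constructor
  · intro hx
    rw [Submodule.mem_sup] at hx
    obtain ⟨y, hy, t, ht, rfl⟩ := hx
    have hΦyt : Φ (y + t) = y + Φ t := by rw [map_add, hΦfixN₁ y hy]
    constructor
    · rw [hΦyt]
      exact Submodule.add_mem _ hy (hΦtopN₁ t ht)
    · have : (y + t) - Φ (y + t) = t - Φ t := by rw [hΦyt]; abel
      rw [this]
      exact Submodule.sub_mem _ ht (hΦT t ht)
  · rintro ⟨h1, h2⟩
    exact Submodule.mem_sup.mpr ⟨Φ x, h1, x - Φ x, h2, by abel⟩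

end Step
section Gen

variable {k : Type*} [Field k] {A : Type*} [CommRing A] [Algebra k A]

theorem qcolon_sum_filtration (K : Ideal A) :
    ∀ (s : ℕ) (M : Type u) [AddCommGroup M] [Module k M]
      (J : ℕ → Submodule k M), (∀ j, J (j + 1) ≤ J j) → J 0 = ⊤ →
      ∀ (I : ℕ → Ideal A), (∀ i, I (i + 1) ≤ I i) → I 0 = ⊤ →
      qcolon (∑ i ∈ Finset.range (s + 1), I i • (J (s - i)).baseChange A) K =
        ∑ i ∈ Finset.range (s + 1), (I i).colon K • (J (s - i)).baseChange A := by
  intro s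
  induction s with
  | zero =>
    intro M _ _ J hJ hJ0 I hIa hI0
    rw [Finset.sum_range_one, Finset.sum_range_one, Nat.sub_self, hJ0, hI0,
      Submodule.baseChange_top, Submodule.top_smul, qcolon_top, top_colon,
      Submodule.top_smul]
  | succ s ih =>
    intro M _ _ J hJ hJ0 I hIa hI0
    classical
    have hJanti : Antitone J := antitone_nat_of_succ_le hJ
    set f : ↥(J 1) →ₗ[k] M := (J 1).subtype with hfdef
    obtain ⟨r, hr⟩ := f.exists_leftInverse_of_injective (Submodule.ker_subtype _)
    set p : M →ₗ[k] M := f ∘ₗ r with hpdef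
    have hrf : ∀ y : ↥(J 1), r (f y) = y := fun y => by
      have := LinearMap.congr_fun hr y
      simpa using this
    have hp_fix : ∀ v ∈ J 1, p v = v := by
      intro v hv
      have : p (f ⟨v, hv⟩) = f ⟨v, hv⟩ := by
        rw [hpdef]
        simp only [LinearMap.comp_apply]
        rw [hrf]
      simpa [hfdef] using this
    have hp_range : LinearMap.range p ≤ J 1 := by
      rintro x ⟨y, rfl⟩
      rw [hpdef]
      simp only [LinearMap.comp_apply, hfdef, Submodule.coe_subtype]
      exact Submodule.coe_mem _
    set Φ := p.baseChange A with hΦdef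
    set F := f.baseChange A with hFdef
    set Rr := r.baseChange A with hRrdef
    have hΦFR : ∀ x, Φ x = F (Rr x) := by
      intro x
      rw [hΦdef, hpdef, LinearMap.baseChange_comp]
      rfl
    have hRF : ∀ z, Rr (F z) = z := by
      intro z
      have h1 : (r ∘ₗ f).baseChange A = LinearMap.id := by rw [hr, LinearMap.baseChange_id]
      have h2 := LinearMap.congr_fun ((LinearMap.baseChange_comp (A := A) f r).symm.trans h1) z
      simpa using h2
    have hFinj : Function.Injective F := Function.LeftInverse.injective hRF
    set J' : ℕ → Submodule k ↥(J 1) := fun j => (J (j + 1)).comap f with hJ'def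
    have hJ'succ : ∀ j, J' (j + 1) ≤ J' j := fun j => Submodule.comap_mono (hJ (j + 1))
    have hJ'0 : J' 0 = ⊤ := Submodule.comap_subtype_self _
    have hIcol : ∀ i, ((I (i + 1)).colon K) ≤ (I i).colon K := fun i => colon_mono_left (hIa i)
    have hmem_map : ∀ (N' : Submodule A (A ⊗[k] ↥(J 1))) (z : A ⊗[k] ↥(J 1)),
        F z ∈ Submodule.map F N' ↔ z ∈ N' := by
      intro N' z
      constructor
      · rintro ⟨w, hw, hFw⟩
        rwa [← hFinj hFw]
      · exact Submodule.mem_map_of_mem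
    have hmapI : Submodule.map F (∑ i ∈ Finset.range (s + 1),
          I i • (J' (s - i)).baseChange A) =
        ∑ i ∈ Finset.range (s + 1), I i • (J (s + 1 - i)).baseChange A :=
      step_map_sum s J hJanti I
    have hmapC : Submodule.map F (∑ i ∈ Finset.range (s + 1),
          (I i).colon K • (J' (s - i)).baseChange A) =
        ∑ i ∈ Finset.range (s + 1), (I i).colon K • (J (s + 1 - i)).baseChange A :=
      step_map_sum s J hJanti (fun i => (I i).colon K)
    have hsplitI' : ∀ x : A ⊗[k] M,
        x ∈ ∑ i ∈ Finset.range (s + 1 + 1), I i • (J (s + 1 - i)).baseChange A ↔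
          Φ x ∈ ∑ i ∈ Finset.range (s + 1), I i • (J (s + 1 - i)).baseChange A ∧
            x - Φ x ∈ I (s + 1) • (⊤ : Submodule A (A ⊗[k] M)) :=
      fun x => step_split s J hJanti hJ0 hp_fix hp_range I hIa x
    have hsplitC' : ∀ x : A ⊗[k] M,
        x ∈ ∑ i ∈ Finset.range (s + 1 + 1), (I i).colon K • (J (s + 1 - i)).baseChange A ↔
          Φ x ∈ ∑ i ∈ Finset.range (s + 1), (I i).colon K • (J (s + 1 - i)).baseChange A ∧
            x - Φ x ∈ (I (s + 1)).colon K • (⊤ : Submodule A (A ⊗[k] M)) :=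
      fun x => step_split s J hJanti hJ0 hp_fix hp_range (fun i => (I i).colon K) hIcol x
    have ihM' : qcolon (∑ i ∈ Finset.range (s + 1), I i • (J' (s - i)).baseChange A) K =
        ∑ i ∈ Finset.range (s + 1), (I i).colon K • (J' (s - i)).baseChange A :=
      ih ↥(J 1) J' hJ'succ hJ'0 I hIa hI0
    have hT := qcolon_ideal_smul_top ((Module.Basis.ofVectorSpace k M).baseChange A) (I (s + 1)) K
    ext x
    rw [mem_qcolon]
    constructor
    · intro hx
      rw [hsplitC' x]
      refine ⟨?_, ?_⟩
      · rw [← hmapC, hΦFR x, hmem_map, ← ihM', mem_qcolon]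
        intro c hc
        have h1 := ((hsplitI' (c • x)).mp (hx c hc)).1
        rw [map_smul, hΦFR x, ← map_smul F, ← hmapI, hmem_map] at h1
        exact h1
      · rw [← hT, mem_qcolon]
        intro c hc
        have h2 := ((hsplitI' (c • x)).mp (hx c hc)).2
        rw [map_smul] at h2
        convert h2 using 2
        exact smul_sub c x (Φ x)
    · intro hx c hc
      rw [hsplitC' x] at hx
      obtain ⟨h1, h2⟩ := hx
      rw [hsplitI' (c • x)]
      refine ⟨?_, ?_⟩
      · rw [map_smul, hΦFR x, ← map_smul F, ← hmapI, hmem_map]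
        have h1' : Rr x ∈ qcolon (∑ i ∈ Finset.range (s + 1),
            I i • (J' (s - i)).baseChange A) K := by
          rw [ihM', ← hmem_map, hmapC, ← hΦFR x]
          exact h1
        rw [mem_qcolon] at h1'
        exact h1' c hc
      · rw [← hT, mem_qcolon] at h2
        have h2' := h2 c hc
        rw [map_smul]
        convert h2' using 2
        exact (smul_sub c x (Φ x)).symm
end Gen
section Bridge

variable {k A B : Type*} [Field k] [CommRing A] [CommRing B] [Algebra k A] [Algebra k B]

lemma restrictScalars_sum_ideal {ι : Type*} (t : Finset ι) (G : ι → Ideal (A ⊗[k] B)) :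
    Submodule.restrictScalars A (∑ i ∈ t, G i) =
      ∑ i ∈ t, Submodule.restrictScalars A (G i) := by
  classical
  induction t using Finset.induction_on with
  | empty => simp [Submodule.zero_eq_bot]
  | insert _ _ hni ih =>
    rw [Finset.sum_insert hni, Finset.sum_insert hni, Submodule.add_eq_sup,
      Submodule.add_eq_sup, ← ih]
    ext x
    simp only [Submodule.restrictScalars_mem, Submodule.mem_sup,
      Submodule.restrictScalars_mem]

lemma algebraMap_eq_includeLeft (c : A) :
    algebraMap A (A ⊗[k] B) c = Algebra.TensorProduct.includeLeft (S := k) c := rfl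

lemma restrict_colon (N : Ideal (A ⊗[k] B)) (K : Ideal A) :
    Submodule.restrictScalars A (N.colon (extL k B K)) =
      qcolon (Submodule.restrictScalars A N) K := by
  ext x
  simp only [Submodule.restrictScalars_mem, mem_qcolon, Submodule.mem_colon]
  constructor
  · intro h c hc
    have hmem : (Algebra.TensorProduct.includeLeft (S := k) c : A ⊗[k] B) ∈ extL k B K :=
      Ideal.mem_map_of_mem _ hc
    have h2 := h _ hmem
    rw [smul_eq_mul] at h2
    rw [Algebra.smul_def, algebraMap_eq_includeLeft, mul_comm]
    exact h2
  · intro h q hq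
    rw [smul_eq_mul]
    have : ∀ q ∈ extL k B K, x * q ∈ N := by
      intro q hq
      refine Submodule.span_induction ?_ ?_ ?_ ?_ hq
      · rintro y ⟨c, hc, rfl⟩
        have := h c hc
        rwa [Algebra.smul_def, algebraMap_eq_includeLeft, mul_comm] at this
      · simp
      · intro a b _ _ ha hb
        rw [mul_add]
        exact N.add_mem ha hb
      · intro r y _ hy
        rw [smul_eq_mul, ← mul_assoc, mul_comm x r, mul_assoc]
        exact N.mul_mem_left r hy
    exact this q hq

lemma restrict_mul_extL (I : Ideal A) (P : Ideal (A ⊗[k] B)) :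
    Submodule.restrictScalars A (extL k B I * P) =
      I • Submodule.restrictScalars A P := by
  apply le_antisymm
  · intro x hx
    rw [Submodule.restrictScalars_mem] at hx
    have hstab : ∀ r : A ⊗[k] B, ∀ z ∈ I • Submodule.restrictScalars A P,
        r * z ∈ I • Submodule.restrictScalars A P := by
      intro r z hz
      refine Submodule.smul_induction_on hz ?_ ?_
      · intro c hc w hw
        rw [Algebra.mul_smul_comm]
        exact Submodule.smul_mem_smul hc (P.mul_mem_left r hw)
      · intro a b ha hb
        rw [mul_add]
        exact Submodule.add_mem _ ha hb
    refine Submodule.mul_induction_on hx ?_ ?_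
    · intro m hm n hn
      have : ∀ m ∈ extL k B I, m * n ∈ I • Submodule.restrictScalars A P := by
        intro m hm
        refine Submodule.span_induction ?_ ?_ ?_ ?_ hm
        · rintro y ⟨c, hc, rfl⟩
          have : (Algebra.TensorProduct.includeLeft (S := k) c : A ⊗[k] B) * n = c • n := by
            rw [Algebra.smul_def, algebraMap_eq_includeLeft]
          rw [this]
          exact Submodule.smul_mem_smul hc hn
        · simp
        · intro a b _ _ ha hb
          rw [add_mul]
          exact Submodule.add_mem _ ha hb
        · intro r y _ hy
          rw [smul_eq_mul, mul_assoc]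
          exact hstab r _ hy
      exact this m hm
    · intro a b ha hb
      exact Submodule.add_mem _ ha hb
  · rw [Submodule.smul_le]
    intro c hc n hn
    rw [Submodule.restrictScalars_mem] at hn ⊢
    rw [Algebra.smul_def, algebraMap_eq_includeLeft]
    exact Ideal.mul_mem_mul (Ideal.mem_map_of_mem _ hc) hn

lemma restrict_extR (J : Ideal B) :
    Submodule.restrictScalars A (extR k A J) =
      (Submodule.restrictScalars k J).baseChange A := by
  apply le_antisymm
  · intro x hx
    rw [Submodule.restrictScalars_mem] at hx
    have hmul : ∀ x ∈ (Submodule.restrictScalars k J).baseChange A,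
        ∀ r : A ⊗[k] B, r * x ∈ (Submodule.restrictScalars k J).baseChange A := by
      intro x hx
      rw [Submodule.baseChange_eq_span] at hx
      refine Submodule.span_induction ?_ ?_ ?_ ?_ hx
      · rintro y ⟨j, hj, rfl⟩
        intro r
        induction r using TensorProduct.induction_on with
        | zero => simpa using Submodule.zero_mem _
        | tmul a b =>
          have : (a ⊗ₜ[k] b) * ((TensorProduct.mk k A B) 1 j) = a ⊗ₜ[k] (b * j) := by
            simp [TensorProduct.mk_apply, Algebra.TensorProduct.tmul_mul_tmul]
          rw [this]
          exact Submodule.tmul_mem_baseChange_of_mem a (J.mul_mem_left b hj)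
        | add r₁ r₂ h₁ h₂ =>
          rw [add_mul]
          exact Submodule.add_mem _ h₁ h₂
      · intro r
        rw [mul_zero]
        exact Submodule.zero_mem _
      · intro y z _ _ hy hz r
        rw [mul_add]
        exact Submodule.add_mem _ (hy r) (hz r)
      · intro a y _ hy r
        rw [Algebra.mul_smul_comm]
        exact Submodule.smul_mem _ a (hy r)
    refine Submodule.span_induction ?_ ?_ ?_ ?_ hx
    · rintro y ⟨j, hj, rfl⟩
      exact Submodule.tmul_mem_baseChange_of_mem 1 hj
    · exact Submodule.zero_mem _
    · intro y z _ _ hy hz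
      exact Submodule.add_mem _ hy hz
    · intro r y _ hy
      rw [smul_eq_mul]
      exact hmul y hy r
  · rw [Submodule.baseChange_eq_span]
    rw [Submodule.span_le]
    rintro x ⟨j, hj, rfl⟩
    simp only [SetLike.mem_coe, Submodule.restrictScalars_mem]
    have : (TensorProduct.mk k A B) 1 j = Algebra.TensorProduct.includeRight (R := k) (A := A) j :=
      rfl
    rw [this]
    exact Ideal.mem_map_of_mem _ hj

end Bridge

/-- For descending filtrations with `I₀ = A`, `J₀ = B` and an ideal `K ⊆ A`:
`(Σ_{i=0}^s Iᵢ J_{s-i}) :_R K = Σ_{i=0}^s (Iᵢ :_A K) J_{s-i}`. -/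
theorem colon_ideal_binom_sum {k A B : Type*} [Field k] [CommRing A] [CommRing B]
    [Algebra k A] [Algebra k B] [IsNoetherianRing A] [IsNoetherianRing B]
    [IsNoetherianRing (A ⊗[k] B)]
    (I : ℕ → Ideal A) (J : ℕ → Ideal B)
    (hI : ∀ i, I (i + 1) ≤ I i) (hJ : ∀ j, J (j + 1) ≤ J j)
    (hI0 : I 0 = ⊤) (hJ0 : J 0 = ⊤)
    (K : Ideal A) (s : ℕ) :
    (∑ i ∈ Finset.range (s + 1), extL k B (I i) * extR k A (J (s - i))).colon
        (extL k B K) =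
      ∑ i ∈ Finset.range (s + 1), extL k B ((I i).colon K) * extR k A (J (s - i)) := by

  apply Submodule.restrictScalars_injective A
  rw [restrict_colon, restrictScalars_sum_ideal, restrictScalars_sum_ideal]
  have hterm : ∀ (Ii : Ideal A) (Jj : Ideal B),
      Submodule.restrictScalars A (extL k B Ii * extR k A Jj) =
        Ii • (Submodule.restrictScalars k Jj).baseChange A := fun Ii Jj => by
    rw [restrict_mul_extL, restrict_extR]
  rw [Finset.sum_congr rfl fun i _ => hterm (I i) (J (s - i)),
    Finset.sum_congr rfl fun i _ => hterm ((I i).colon K) (J (s - i))]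
  exact qcolon_sum_filtration K s B (fun j => Submodule.restrictScalars k (J j))
    (fun j x hx => hJ j hx) (by show Submodule.restrictScalars k (J 0) = ⊤; rw [hJ0]; rfl) I hI hI0
end

section
/- Let k be a field, A and B Noetherian k-algebras with R = A ⊗_k B Noetherian. Let I, K ⊆ A and J, L ⊆ B be ideals. Then for every s ≥ 0, Σ_{i=0}^s (I^i : K^∞)(J^{s-i} : L^∞) ⊆ (I+J)^s :_R (KL)^∞, where I+J denotes IR + JR and KL denotes (KR)(LR). -/
open TensorProduct Ideal

lemma le_colon_of_mul_le {R : Type*} [CommRing R] {X P Q : Ideal R} (h : X * Q ≤ P) :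
    X ≤ P.colon Q := fun x hx =>
  Submodule.mem_colon.2 fun q hq => h (Ideal.mul_mem_mul hx hq)

lemma colon_mul_le {R : Type*} [CommRing R] (P Q : Ideal R) : P.colon Q * Q ≤ P :=
  Ideal.mul_le.2 fun r hr q hq => Submodule.mem_colon.1 hr q hq

lemma map_colon_le {R S F : Type*} [CommRing R] [CommRing S] [FunLike F R S]
    [RingHomClass F R S] (f : F) (P Q : Ideal R) :
    (P.colon Q).map f ≤ (P.map f).colon (Q.map f) := by
  apply le_colon_of_mul_le
  rw [← Ideal.map_mul]
  exact Ideal.map_mono (colon_mul_le P Q)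

/-- `Σ_{i=0}^s (Iⁱ : K^∞)(J^{s-i} : L^∞) ⊆ (I+J)^s :_R (KL)^∞` in `R = A ⊗[k] B`. -/
theorem sum_satur_le_satur_sum {k A B : Type*} [Field k] [CommRing A] [CommRing B]
    [Algebra k A] [Algebra k B] [IsNoetherianRing A] [IsNoetherianRing B]
    [IsNoetherianRing (A ⊗[k] B)]
    (I K : Ideal A) (J L : Ideal B) (s : ℕ) :
    ∑ i ∈ Finset.range (s + 1),
        extL k B (satur (I ^ i) K) * extR k A (satur (J ^ (s - i)) L) ≤
      satur ((extL k B I + extR k A J) ^ s) (extL k B K * extR k A L) := by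
  have key : ∀ i ∈ Finset.range (s + 1),
      extL k B (satur (I ^ i) K) * extR k A (satur (J ^ (s - i)) L) ≤
      satur ((extL k B I + extR k A J) ^ s) (extL k B K * extR k A L) := by
    intro i hi
    rw [Finset.mem_range, Nat.lt_succ_iff] at hi
    unfold satur extL extR
    rw [Ideal.map_iSup, Ideal.map_iSup, Submodule.iSup_mul]
    refine iSup_le fun t => ?_
    rw [Submodule.mul_iSup]
    refine iSup_le fun u => ?_
    refine le_iSup_of_le (t + u) ?_
    apply le_colon_of_mul_le
    calc ((I ^ i).colon ((K ^ t : Ideal A) : Set A)).map _ * ((J ^ (s - i)).colon ((L ^ u : Ideal B) : Set B)).map _ *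
          (Ideal.map _ K * Ideal.map _ L) ^ (t + u)
        ≤ ((I ^ i).colon ((K ^ t : Ideal A) : Set A)).map _ * ((J ^ (s - i)).colon ((L ^ u : Ideal B) : Set B)).map _ *
          ((Ideal.map _ K) ^ t * (Ideal.map _ L) ^ u) := by
          refine mul_le_mul_right ?_ _
          rw [mul_pow]
          exact mul_le_mul' (Ideal.pow_le_pow_right (by omega)) (Ideal.pow_le_pow_right (by omega))
      _ = (((I ^ i).colon ((K ^ t : Ideal A) : Set A)).map _ * (Ideal.map _ K) ^ t) *
          (((J ^ (s - i)).colon ((L ^ u : Ideal B) : Set B)).map _ * (Ideal.map _ L) ^ u) := by ring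
      _ ≤ (I ^ i).map (Algebra.TensorProduct.includeLeft : A →ₐ[k] A ⊗[k] B) *
          (J ^ (s - i)).map (Algebra.TensorProduct.includeRight : B →ₐ[k] A ⊗[k] B) := by
          refine mul_le_mul' ?_ ?_ <;>
          · rw [← Ideal.map_pow, ← Ideal.map_mul]
            exact Ideal.map_mono (colon_mul_le _ _)
      _ ≤ (Ideal.map _ I + Ideal.map _ J) ^ i * (Ideal.map _ I + Ideal.map _ J) ^ (s - i) := by
          rw [Ideal.map_pow, Ideal.map_pow]
          exact mul_le_mul' (pow_le_pow_left' le_sup_left i)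
            (pow_le_pow_left' le_sup_right (s - i))
      _ = (Ideal.map _ I + Ideal.map _ J) ^ s := by
          rw [← pow_add]; congr 1; omega
  exact Finset.sum_induction _ (fun x => x ≤ _) (fun a b ha hb => sup_le ha hb) bot_le key
end

section
/- Converse of the equality criterion for saturated powers: Let k be a field, A and B Noetherian k-algebras with R = A ⊗_k B Noetherian, I, K ⊆ A and J, L ⊆ B ideals, and s ≥ 1 an integer with I^{s-1} ≠ I^s and J^{s-1} ≠ J^s. If (I+J)^s :_R (KL)^∞ = (I+J)^s, then I^i :_A K^∞ = I^i and J^i :_B L^∞ = J^i for all 1 ≤ i ≤ s. -/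
open TensorProduct Ideal

/-- Membership in the saturation. -/
lemma mem_satur {A : Type*} [CommRing A] {I K : Ideal A} {x : A} :
    x ∈ satur I K ↔ ∃ t : ℕ, x ∈ I.colon ((K ^ t : Ideal A) : Set A) := by
  unfold satur
  rw [Submodule.mem_iSup_of_directed]
  intro t₁ t₂
  exact ⟨max t₁ t₂, Submodule.colon_mono le_rfl (SetLike.coe_subset_coe.mpr (Ideal.pow_le_pow_right (le_max_left _ _))),
    Submodule.colon_mono le_rfl (SetLike.coe_subset_coe.mpr (Ideal.pow_le_pow_right (le_max_right _ _)))⟩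

lemma self_le_satur {A : Type*} [CommRing A] (I K : Ideal A) : I ≤ satur I K := by
  intro x hx
  exact mem_satur.mpr ⟨0, Submodule.mem_colon.mpr fun p _ => by
    rw [smul_eq_mul]; exact Ideal.mul_mem_right _ _ hx⟩

/-- In a tensor product of vector spaces, a pure tensor vanishes only if a factor does. -/
lemma tmul_eq_zero_vs {k V W : Type*} [Field k] [AddCommGroup V] [AddCommGroup W]
    [Module k V] [Module k W] {v : V} {w : W} (h : v ⊗ₜ[k] w = 0) : v = 0 ∨ w = 0 := by
  by_contra hc
  push_neg at hc
  obtain ⟨hv, hw⟩ := hc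
  obtain ⟨f, hf⟩ : ∃ f : Module.Dual k V, f v ≠ 0 := by
    by_contra hf; push_neg at hf
    exact hv ((Module.forall_dual_apply_eq_zero_iff k v).mp hf)
  obtain ⟨g, hg⟩ : ∃ g : Module.Dual k W, g w ≠ 0 := by
    by_contra hg; push_neg at hg
    exact hw ((Module.forall_dual_apply_eq_zero_iff k w).mp hg)
  have := congrArg (fun x => (TensorProduct.lid k k) (TensorProduct.map f g x)) h
  simp only [TensorProduct.map_tmul, TensorProduct.lid_tmul, smul_eq_mul, map_zero] at this
  rcases mul_eq_zero.mp this with h' | h'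
  · exact hf h'
  · exact hg h'

/-- A pure tensor lies in `extL I ⊔ extR J` only if a factor lies in the
corresponding ideal. -/
lemma tmul_mem_sup {k A B : Type*} [Field k] [CommRing A] [CommRing B]
    [Algebra k A] [Algebra k B] {I' : Ideal A} {J' : Ideal B} {a : A} {b : B}
    (h : a ⊗ₜ[k] b ∈ extL k B I' ⊔ extR k A J') : a ∈ I' ∨ b ∈ J' := by
  by_contra hc
  push_neg at hc
  obtain ⟨ha, hb⟩ := hc
  let φ := Algebra.TensorProduct.map (Ideal.Quotient.mkₐ k I') (Ideal.Quotient.mkₐ k J')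
  have hker : extL k B I' ⊔ extR k A J' ≤ RingHom.ker (φ : A ⊗[k] B →+* (A ⧸ I') ⊗[k] (B ⧸ J')) := by
    apply sup_le
    · rw [extL, Ideal.map_le_iff_le_comap]
      intro x hx
      have : φ ((Algebra.TensorProduct.includeLeft : A →ₐ[k] A ⊗[k] B) x) = 0 := by
        simp only [Algebra.TensorProduct.includeLeft_apply, Algebra.TensorProduct.map_tmul, φ,
          Ideal.Quotient.mkₐ_eq_mk]
        rw [Ideal.Quotient.eq_zero_iff_mem.mpr hx, TensorProduct.zero_tmul]
      exact this
    · rw [extR, Ideal.map_le_iff_le_comap]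
      intro x hx
      have : φ ((Algebra.TensorProduct.includeRight : B →ₐ[k] A ⊗[k] B) x) = 0 := by
        simp only [Algebra.TensorProduct.includeRight_apply, Algebra.TensorProduct.map_tmul, φ,
          Ideal.Quotient.mkₐ_eq_mk]
        rw [Ideal.Quotient.eq_zero_iff_mem.mpr hx, TensorProduct.tmul_zero]
      exact this
  have h0 : φ (a ⊗ₜ[k] b) = 0 := hker h
  have h0' : (Ideal.Quotient.mk I' a) ⊗ₜ[k] (Ideal.Quotient.mk J' b) = 0 := by
    simpa [φ, Algebra.TensorProduct.map_tmul] using h0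
  rcases tmul_eq_zero_vs h0' with h' | h'
  · exact ha (Ideal.Quotient.eq_zero_iff_mem.mp h')
  · exact hb (Ideal.Quotient.eq_zero_iff_mem.mp h')

/-- `(P + Q)^s ≤ P^i ⊔ Q^(s-i+1)` for `i ≤ s`. -/
lemma add_pow_le' {R : Type*} [CommRing R] (P Q : Ideal R) {i s : ℕ} (hi : i ≤ s) :
    (P + Q) ^ s ≤ P ^ i ⊔ Q ^ (s - i + 1) := by
  rw [add_pow, Ideal.sum_eq_sup]
  apply Finset.sup_le
  intro p hp
  have hps : p ≤ s := Nat.lt_succ_iff.mp (Finset.mem_range.mp hp)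
  by_cases hn : i ≤ p
  · exact Ideal.mul_le_left.trans (Ideal.mul_le_left.trans
      ((Ideal.pow_le_pow_right hn).trans le_sup_left))
  · refine Ideal.mul_le_left.trans (Ideal.mul_le_right.trans
      ((Ideal.pow_le_pow_right ?_).trans le_sup_right))
    omega

lemma pow_stab {R : Type*} [CommRing R] (I : Ideal R) {j : ℕ} (h : I ^ j = I ^ (j + 1)) :
    ∀ m, I ^ (j + m) = I ^ (j + m + 1) := by
  intro m
  induction m with
  | zero => simpa using h
  | succ n ih =>
      rw [show j + (n + 1) = (j + n) + 1 from by omega, pow_succ, pow_succ, ih]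

/-- If `I^(s-1) ≠ I^s` then `I^j ≠ I^(j+1)` for all `j ≤ s - 1`. -/
lemma pow_ne_of_pow_ne {R : Type*} [CommRing R] (I : Ideal R) {j s : ℕ} (hs : 1 ≤ s)
    (hj : j ≤ s - 1) (h : I ^ (s - 1) ≠ I ^ s) : I ^ j ≠ I ^ (j + 1) := by
  intro he
  apply h
  have := pow_stab I he (s - 1 - j)
  have e1 : j + (s - 1 - j) = s - 1 := by omega
  have e2 : s - 1 + 1 = s := by omega
  rwa [e1, e2] at this

/-- Key membership: if `span{a} * K^t ≤ I^p` and `span{b} * L^t ≤ J^q` with `p + q = s`,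
then `a ⊗ b` lies in the saturation of `(I+J)^s` with respect to `K·L`. -/
lemma tmul_mem_satur {k A B : Type*} [Field k] [CommRing A] [CommRing B]
    [Algebra k A] [Algebra k B] (I K : Ideal A) (J L : Ideal B) {s p q t : ℕ}
    (hpq : p + q = s) {a : A} {b : B}
    (ha : Ideal.span {a} * K ^ t ≤ I ^ p) (hb : Ideal.span {b} * L ^ t ≤ J ^ q) :
    a ⊗ₜ[k] b ∈ satur ((extL k B I + extR k A J) ^ s) (extL k B K * extR k A L) := by
  have key : Ideal.span {a ⊗ₜ[k] b} * (extL k B K * extR k A L) ^ t ≤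
      (extL k B I + extR k A J) ^ s := by
    have e1 : (Ideal.span {a ⊗ₜ[k] b} : Ideal (A ⊗[k] B)) =
        extL k B (Ideal.span {a}) * extR k A (Ideal.span {b}) := by
      rw [extL, extR, Ideal.map_span, Ideal.map_span, Set.image_singleton,
        Set.image_singleton, Ideal.span_singleton_mul_span_singleton]
      congr 1
      simp [Algebra.TensorProduct.tmul_mul_tmul]
    have e2 : (extL k B K * extR k A L) ^ t = extL k B (K ^ t) * extR k A (L ^ t) := by
      rw [mul_pow]
      simp only [extL, extR, ← Ideal.map_pow]
    rw [e1, e2, mul_mul_mul_comm]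
    simp only [extL, extR]
    rw [← Ideal.map_mul, ← Ideal.map_mul]
    calc Ideal.map (Algebra.TensorProduct.includeLeft : A →ₐ[k] A ⊗[k] B)
          (Ideal.span {a} * K ^ t) *
        Ideal.map (Algebra.TensorProduct.includeRight : B →ₐ[k] A ⊗[k] B)
          (Ideal.span {b} * L ^ t)
        ≤ Ideal.map (Algebra.TensorProduct.includeLeft : A →ₐ[k] A ⊗[k] B) (I ^ p) *
          Ideal.map (Algebra.TensorProduct.includeRight : B →ₐ[k] A ⊗[k] B) (J ^ q) :=
        Ideal.mul_mono (Ideal.map_mono ha) (Ideal.map_mono hb)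
      _ = extL k B I ^ p * extR k A J ^ q := by rw [extL, extR, Ideal.map_pow, Ideal.map_pow]
      _ ≤ (extL k B I + extR k A J) ^ p * (extL k B I + extR k A J) ^ q :=
        Ideal.mul_mono (Ideal.pow_right_mono le_sup_left p) (Ideal.pow_right_mono le_sup_right q)
      _ = (extL k B I + extR k A J) ^ s := by rw [← pow_add, hpq]
  refine mem_satur.mpr ⟨t, Submodule.mem_colon.mpr fun x hx => ?_⟩
  rw [smul_eq_mul]
  exact key (Ideal.mul_mem_mul (Ideal.mem_span_singleton_self _) hx)

/-- Converse of the equality criterion: if `I^{s-1} ≠ I^s`, `J^{s-1} ≠ J^s` and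
`(I+J)^s :_R (KL)^∞ = (I+J)^s`, then `Iⁱ :_A K^∞ = Iⁱ` and `Jⁱ :_B L^∞ = Jⁱ`
for all `1 ≤ i ≤ s`. -/
theorem satur_power_eq_power_converse {k A B : Type*} [Field k] [CommRing A]
    [CommRing B] [Algebra k A] [Algebra k B] [IsNoetherianRing A] [IsNoetherianRing B]
    [IsNoetherianRing (A ⊗[k] B)]
    (I K : Ideal A) (J L : Ideal B) (s : ℕ) (hs : 1 ≤ s)
    (hI : I ^ (s - 1) ≠ I ^ s) (hJ : J ^ (s - 1) ≠ J ^ s)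
    (h : satur ((extL k B I + extR k A J) ^ s) (extL k B K * extR k A L) =
      (extL k B I + extR k A J) ^ s) :
    ∀ i, 1 ≤ i → i ≤ s → satur (I ^ i) K = I ^ i ∧ satur (J ^ i) L = J ^ i := by
  intro i h1 hi
  constructor
  · refine le_antisymm ?_ (self_le_satur _ _)
    intro x hx
    obtain ⟨t, ht⟩ := mem_satur.mp hx
    -- pick b ∈ J^(s-i) \ J^(s-i+1)
    have hJne : J ^ (s - i) ≠ J ^ (s - i + 1) := pow_ne_of_pow_ne J hs (by omega) hJ
    have hlt : J ^ (s - i + 1) < J ^ (s - i) :=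
      lt_of_le_of_ne (Ideal.pow_le_pow_right (Nat.le_succ _)) (Ne.symm hJne)
    obtain ⟨b, hb1, hb2⟩ := SetLike.exists_of_lt hlt
    have ha : Ideal.span {x} * K ^ t ≤ I ^ i := by
      rw [Ideal.span_singleton_mul_le_iff]
      intro c hc
      have := Submodule.mem_colon.mp ht c hc
      rwa [smul_eq_mul] at this
    have hb : Ideal.span {b} * L ^ t ≤ J ^ (s - i) :=
      Ideal.mul_le_left.trans ((Ideal.span_singleton_le_iff_mem _).mpr hb1)
    have hmem := tmul_mem_satur (k := k) I K J L (s := s) (p := i) (q := s - i) (t := t)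
      (by omega) ha hb
    rw [h] at hmem
    have hle : (extL k B I + extR k A J) ^ s ≤
        extL k B (I ^ i) ⊔ extR k A (J ^ (s - i + 1)) := by
      have := add_pow_le' (extL k B I) (extR k A J) hi
      rwa [extL, extR, ← Ideal.map_pow, ← Ideal.map_pow] at this
    rcases tmul_mem_sup (hle hmem) with h' | h'
    · exact h'
    · exact absurd h' hb2
  · refine le_antisymm ?_ (self_le_satur _ _)
    intro x hx
    obtain ⟨t, ht⟩ := mem_satur.mp hx
    have hIne : I ^ (s - i) ≠ I ^ (s - i + 1) := pow_ne_of_pow_ne I hs (by omega) hI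
    have hlt : I ^ (s - i + 1) < I ^ (s - i) :=
      lt_of_le_of_ne (Ideal.pow_le_pow_right (Nat.le_succ _)) (Ne.symm hIne)
    obtain ⟨a, ha1, ha2⟩ := SetLike.exists_of_lt hlt
    have hb : Ideal.span {x} * L ^ t ≤ J ^ i := by
      rw [Ideal.span_singleton_mul_le_iff]
      intro c hc
      have := Submodule.mem_colon.mp ht c hc
      rwa [smul_eq_mul] at this
    have ha : Ideal.span {a} * K ^ t ≤ I ^ (s - i) :=
      Ideal.mul_le_left.trans ((Ideal.span_singleton_le_iff_mem _).mpr ha1)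
    have hmem := tmul_mem_satur (k := k) I K J L (s := s) (p := s - i) (q := i) (t := t)
      (by omega) ha hb
    rw [h] at hmem
    have hle : (extL k B I + extR k A J) ^ s ≤
        extL k B (I ^ (s - i + 1)) ⊔ extR k A (J ^ i) := by
      have := add_pow_le' (extR k A J) (extL k B I) hi
      rw [add_comm] at this
      simp only [extL, extR] at this ⊢
      rw [← Ideal.map_pow, ← Ideal.map_pow] at this
      exact this.trans (le_of_eq (sup_comm _ _))
    rcases tmul_mem_sup (hle hmem) with h' | h'
    · exact absurd h' ha2
    · exact h'
end

section
/- Let I be a monomial ideal and K a monomial ideal in a polynomial ring A = k[x_1,…,x_d], and let s ≥ 1. Then the saturated power I^s : K^∞ is a monomial ideal, and for every monomial f and variable x_i with f·x_i ∈ I^s : K^∞, one has f ∈ I^{s-1} : K^∞. In other words, ∂*(I^s : K^∞) ⊆ I^{s-1} : K^∞, where ∂*(M) denotes the ideal generated by all f/x_i with f a monomial of M divisible by x_i. -/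
open Ideal MvPolynomial Pointwise

/-- An ideal of a polynomial ring is a monomial ideal if it is generated by monomials. -/
def IsMonomialIdeal {k : Type*} [Field k] {d : ℕ}
    (I : Ideal (MvPolynomial (Fin d) k)) : Prop :=
  ∃ S : Set (Fin d →₀ ℕ), I = Ideal.span ((fun m => monomial m (1 : k)) '' S)

section Aux
variable {k : Type*} [Field k] {d : ℕ}

lemma mon_mem_of_le {J : Ideal (MvPolynomial (Fin d) k)} {a ν : Fin d →₀ ℕ}
    (h : monomial a (1 : k) ∈ J) (hle : a ≤ ν) : monomial ν (1 : k) ∈ J := by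
  have : monomial ν (1 : k) = monomial (ν - a) 1 * monomial a 1 := by
    rw [monomial_mul, one_mul, tsub_add_cancel_of_le hle]
  rw [this]
  exact J.mul_mem_left _ h

lemma isMonomialIdeal_iff {J : Ideal (MvPolynomial (Fin d) k)} :
    IsMonomialIdeal J ↔ ∀ f ∈ J, ∀ m ∈ f.support, monomial m (1 : k) ∈ J := by
  constructor
  · rintro ⟨S, rfl⟩ f hf m hm
    obtain ⟨a, ha, hle⟩ := mem_ideal_span_monomial_image.1 hf m hm
    exact mon_mem_of_le (Ideal.subset_span ⟨a, ha, rfl⟩) hle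
  · intro h
    refine ⟨{m | monomial m (1 : k) ∈ J}, le_antisymm ?_ ?_⟩
    · intro f hf
      nth_rewrite 1 [f.as_sum]
      refine Ideal.sum_mem _ fun m hm => ?_
      have h1 : monomial m (coeff m f) = C (coeff m f) * monomial m (1 : k) := by
        rw [C_mul_monomial, mul_one]
      rw [h1]
      exact Ideal.mul_mem_left _ _ (Ideal.subset_span ⟨m, h f hf m hm, rfl⟩)
    · rw [Ideal.span_le]
      rintro _ ⟨m, hm, rfl⟩
      exact hm

lemma mon_mem_self {J : Ideal (MvPolynomial (Fin d) k)} (h : IsMonomialIdeal J)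
    {f : MvPolynomial (Fin d) k} (hf : f ∈ J) {m : Fin d →₀ ℕ} (hm : m ∈ f.support) :
    monomial m (1 : k) ∈ J := isMonomialIdeal_iff.1 h f hf m hm

lemma mon_image_mul (S T : Set (Fin d →₀ ℕ)) :
    ((fun m => monomial m (1 : k)) '' S) * ((fun m => monomial m (1 : k)) '' T)
      = (fun m => monomial m (1 : k)) '' (S + T) := by
  ext x
  constructor
  · rintro ⟨_, ⟨a, ha, rfl⟩, _, ⟨b, hb, rfl⟩, rfl⟩
    exact ⟨a + b, ⟨a, ha, b, hb, rfl⟩, by simp [monomial_mul]⟩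
  · rintro ⟨_, ⟨a, ha, b, hb, rfl⟩, rfl⟩
    exact ⟨monomial a 1, ⟨a, ha, rfl⟩, monomial b 1, ⟨b, hb, rfl⟩,
      by simp [monomial_mul]⟩

lemma IsMonomialIdeal.mul {J₁ J₂ : Ideal (MvPolynomial (Fin d) k)}
    (h1 : IsMonomialIdeal J₁) (h2 : IsMonomialIdeal J₂) : IsMonomialIdeal (J₁ * J₂) := by
  obtain ⟨S, rfl⟩ := h1; obtain ⟨T, rfl⟩ := h2
  exact ⟨S + T, by rw [Ideal.span_mul_span', mon_image_mul]⟩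

lemma IsMonomialIdeal.pow {J : Ideal (MvPolynomial (Fin d) k)}
    (h : IsMonomialIdeal J) (n : ℕ) : IsMonomialIdeal (J ^ n) := by
  induction n with
  | zero =>
    refine ⟨{0}, ?_⟩
    rw [pow_zero, Ideal.one_eq_top, Set.image_singleton, monomial_zero', C_1]
    exact (Ideal.span_singleton_one).symm
  | succ n ih => rw [pow_succ]; exact ih.mul h

lemma mon_mem_mul_decomp {J₁ J₂ : Ideal (MvPolynomial (Fin d) k)}
    (h1 : IsMonomialIdeal J₁) (h2 : IsMonomialIdeal J₂) {ν : Fin d →₀ ℕ}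
    (h : monomial ν (1 : k) ∈ J₁ * J₂) :
    ∃ a b, monomial a (1 : k) ∈ J₁ ∧ monomial b (1 : k) ∈ J₂ ∧ a + b ≤ ν := by
  obtain ⟨S, rfl⟩ := h1; obtain ⟨T, rfl⟩ := h2
  rw [Ideal.span_mul_span', mon_image_mul] at h
  have hsup : ν ∈ (monomial ν (1 : k)).support := by
    classical rw [support_monomial, if_neg one_ne_zero]; exact Finset.mem_singleton_self ν
  obtain ⟨c, ⟨a, ha, b, hb, rfl⟩, hle⟩ := mem_ideal_span_monomial_image.1 h ν hsup
  exact ⟨a, b, Ideal.subset_span ⟨a, ha, rfl⟩, Ideal.subset_span ⟨b, hb, rfl⟩, hle⟩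

/-- Key combinatorial lemma: removing a variable from a monomial of `I^s` lands in
`I^(s-1)`. -/
lemma partial_mem_pow {I : Ideal (MvPolynomial (Fin d) k)} (hI : IsMonomialIdeal I) :
    ∀ (s : ℕ) (ν : Fin d →₀ ℕ) (i : Fin d),
      monomial ν (1 : k) ∈ I ^ s → 1 ≤ ν i →
        monomial (ν - Finsupp.single i 1) (1 : k) ∈ I ^ (s - 1) := by
  intro s
  induction s with
  | zero => intro ν i _ _; simp [Ideal.one_eq_top]
  | succ n ih =>
    intro ν i hν hi
    match n, ih with
    | 0, _ => simp [Ideal.one_eq_top]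
    | Nat.succ n, ih =>
      rw [pow_succ] at hν
      obtain ⟨a, b, haI, hbI, hle⟩ := mon_mem_mul_decomp (hI.pow (n + 1)) hI hν
      have hle' : ∀ c, a c + b c ≤ ν c := fun c => by
        have := Finsupp.le_def.1 hle c; simpa using this
      simp only [Nat.add_sub_cancel]
      by_cases hbi : 1 ≤ b i
      · -- a ≤ ν - e_i, and monomial a ∈ I^(n+1)
        refine mon_mem_of_le haI ?_
        rw [Finsupp.le_def]
        intro c
        rw [Finsupp.tsub_apply]
        rcases eq_or_ne c i with rfl | hc
        · have := hle' c
          simp only [Finsupp.single_eq_same]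
          omega
        · simp only [Finsupp.single_apply, if_neg (Ne.symm hc)]
          have := hle' c
          omega
      · by_cases hai : 1 ≤ a i
        · -- use IH on a
          have ha' : monomial (a - Finsupp.single i 1) (1 : k) ∈ I ^ (n + 1 - 1) :=
            ih a i haI hai
          simp only [Nat.add_sub_cancel] at ha'
          have : monomial ((a - Finsupp.single i 1) + b) (1 : k) ∈ I ^ (n + 1) := by
            rw [pow_succ]
            have := Ideal.mul_mem_mul ha' hbI
            rwa [monomial_mul, one_mul] at this
          refine mon_mem_of_le this ?_
          rw [Finsupp.le_def]
          intro c
          rw [Finsupp.add_apply, Finsupp.tsub_apply, Finsupp.tsub_apply]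
          rcases eq_or_ne c i with rfl | hc
          · simp only [Finsupp.single_eq_same]
            have := hle' c
            omega
          · simp only [Finsupp.single_apply, if_neg (Ne.symm hc)]
            have := hle' c
            omega
        · -- a i = b i = 0
          have : monomial (a + b) (1 : k) ∈ I ^ (n + 2) := by
            rw [pow_succ]
            have := Ideal.mul_mem_mul haI hbI
            rwa [monomial_mul, one_mul] at this
          have h2 : monomial (a + b) (1 : k) ∈ I ^ (n + 1) :=
            Ideal.pow_le_pow_right (by omega) this
          refine mon_mem_of_le h2 ?_
          rw [Finsupp.le_def]
          intro c
          rw [Finsupp.add_apply, Finsupp.tsub_apply]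
          rcases eq_or_ne c i with rfl | hc
          · simp only [Finsupp.single_eq_same]
            have := hle' c
            omega
          · simp only [Finsupp.single_apply, if_neg (Ne.symm hc)]
            have := hle' c
            omega

lemma IsMonomialIdeal.colon {J L : Ideal (MvPolynomial (Fin d) k)}
    (hJ : IsMonomialIdeal J) (hL : IsMonomialIdeal L) : IsMonomialIdeal (J.colon L) := by
  rw [isMonomialIdeal_iff]
  intro f hf m hm
  rw [Submodule.mem_colon] at hf ⊢
  intro p hp
  rw [smul_eq_mul]
  nth_rewrite 1 [p.as_sum]
  rw [Finset.mul_sum]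
  refine Ideal.sum_mem _ fun b hb => ?_
  have h1 : monomial m (1 : k) * monomial b (coeff b p)
      = C (coeff b p) * monomial (m + b) (1 : k) := by
    rw [monomial_mul, one_mul, C_mul_monomial, mul_one]
  rw [h1]
  refine Ideal.mul_mem_left _ _ ?_
  -- monomial (m+b) 1 ∈ J
  have hbL : monomial b (1 : k) ∈ L := mon_mem_self hL hp hb
  have hfb : f * monomial b (1 : k) ∈ J := by
    have := hf _ hbL; rwa [smul_eq_mul] at this
  refine mon_mem_self hJ hfb ?_
  rw [MvPolynomial.mem_support_iff, coeff_mul_monomial, mul_one]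
  exact MvPolynomial.mem_support_iff.1 hm

end Aux

/-- For monomial ideals `I, K` in `A = k[x₁,…,x_d]` and `s ≥ 1`, the saturated power
`Iˢ : K^∞` is a monomial ideal, and whenever `f·xᵢ ∈ Iˢ : K^∞` for a monomial `f`
and a variable `xᵢ`, one has `f ∈ I^{s-1} : K^∞`; i.e. `∂*(Iˢ : K^∞) ⊆ I^{s-1} : K^∞`. -/


theorem monomial_partial_star_saturated_power {k : Type*} [Field k] {d : ℕ}
    (I K : Ideal (MvPolynomial (Fin d) k))
    (hI : IsMonomialIdeal I) (hK : IsMonomialIdeal K) (s : ℕ) (hs : 1 ≤ s) :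
    IsMonomialIdeal (satur (I ^ s) K) ∧
      ∀ (m : Fin d →₀ ℕ) (i : Fin d),
        monomial m (1 : k) * X i ∈ satur (I ^ s) K →
          monomial m (1 : k) ∈ satur (I ^ (s - 1)) K := by
  have hdir : ∀ (J : Ideal (MvPolynomial (Fin d) k)),
      Directed (· ≤ ·) (fun t : ℕ => J.colon ((K ^ t : Ideal _) : Set _)) := by
    intro J
    have hmono : Monotone (fun t : ℕ => J.colon ((K ^ t : Ideal _) : Set _)) := by
      intro t t' htt
      exact Submodule.colon_mono le_rfl (SetLike.coe_subset_coe.2 (Ideal.pow_le_pow_right htt))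
    exact hmono.directed_le
  constructor
  · rw [isMonomialIdeal_iff]
    intro f hf m hm
    obtain ⟨t, ht⟩ := (Submodule.mem_iSup_of_directed _ (hdir (I ^ s))).1 hf
    have hcol : IsMonomialIdeal ((I ^ s).colon ((K ^ t : Ideal _) : Set _)) :=
      (hI.pow s).colon (hK.pow t)
    exact le_iSup (fun t : ℕ => (I ^ s).colon ((K ^ t : Ideal _) : Set _)) t
      (mon_mem_self hcol ht hm)
  · intro m i h
    have hXi : monomial m (1 : k) * X i = monomial (m + Finsupp.single i 1) (1 : k) := by
      rw [X, monomial_mul, mul_one]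
    rw [hXi] at h
    obtain ⟨t, ht⟩ := (Submodule.mem_iSup_of_directed _ (hdir (I ^ s))).1 h
    refine le_iSup (fun t : ℕ => (I ^ (s - 1)).colon ((K ^ t : Ideal _) : Set _)) t ?_
    rw [Submodule.mem_colon] at ht ⊢
    intro p hp
    rw [smul_eq_mul]
    nth_rewrite 1 [p.as_sum]
    rw [Finset.mul_sum]
    refine Ideal.sum_mem _ fun b hb => ?_
    have h1 : monomial m (1 : k) * monomial b (coeff b p)
        = C (coeff b p) * monomial (m + b) (1 : k) := by
      rw [monomial_mul, one_mul, C_mul_monomial, mul_one]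
    rw [h1]
    refine Ideal.mul_mem_left _ _ ?_
    have hbK : monomial b (1 : k) ∈ K ^ t := mon_mem_self (hK.pow t) hp hb
    have hmem : monomial (m + Finsupp.single i 1 + b) (1 : k) ∈ I ^ s := by
      have := ht _ hbK
      rwa [smul_eq_mul, monomial_mul, one_mul] at this
    have hkey := partial_mem_pow hI s (m + Finsupp.single i 1 + b) i hmem
      (by simp [Finsupp.add_apply, Finsupp.single_eq_same]; omega)
    have heq : m + Finsupp.single i 1 + b - Finsupp.single i 1 = m + b := by
      rw [add_right_comm, add_tsub_cancel_right]
    rwa [heq] at hkey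
end
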